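/- arXiv:2404.17868 — 5 statements merged into one kernel-verified Lean document; each statement's English description precedes it below -/
import Mathlib

section
/- Let (Ω, μ) be a probability space, A an invertible N×N real matrix with largest and smallest singular values ρ_max and ρ_min and condition number κ(A) = ρ_max/ρ_min, F : Ω → R^N Bochner integrable, and α* := ω ↦ A⁻¹F(ω). Let S be a nonempty set of Bochner-integrable functions Ω → R^N, let α̂_L ∈ S be a minimizer over S of the population loss L(α) = ∫_Ω |Aα(ω) − F(ω)|₂ dμ(ω), and let α̂_H ∈ S be a minimizer over S of the normal-equation loss H(α) = ∫_Ω |AᵀAα(ω) − AᵀF(ω)|₂ dμ(ω). Then ‖α* − α̂_L‖_{L¹(Ω)} ≤ 3 κ(A)² · inf_{α ∈ S} ‖α − α*‖_{L¹(Ω)}. -/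
/-!
Since `A α* = F`, the population loss of `α` is `∫ |A (α - α*)|₂`, and `|A x|₂² = xᵀ (AᵀA) x` lies
between `ρmin² |x|₂²` and `ρmax² |x|₂²` by diagonalising `AᵀA`. Comparing the loss of the minimiser
`αL` with that of an arbitrary `α ∈ S` therefore gives `‖α* - αL‖ ≤ κ(A) ‖α - α*‖` in `L¹`, and
`κ(A) ≤ 3 κ(A)²` because `κ(A) ≥ 1`.
-/

open MeasureTheory Matrix

/-- The Euclidean norm on `ℝ^N`. -/
noncomputable def euclNorm {N : ℕ} (x : Fin N → ℝ) : ℝ := Real.sqrt (∑ i, x i ^ 2)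

theorem Matrix.dotProduct_mulVec_self_of_mem_unitaryGroup {n : Type*} [Fintype n] [DecidableEq n]
    {U : Matrix n n ℝ} (hU : U ∈ unitaryGroup n ℝ) (x : n → ℝ) :
    U *ᵥ x ⬝ᵥ U *ᵥ x = x ⬝ᵥ x := by
  rw [mem_unitaryGroup_iff', star_eq_conjTranspose, conjTranspose_eq_transpose_of_trivial] at hU
  rw [dotProduct_mulVec, vecMul_mulVec, ← mulVec_transpose, hU, transpose_one, one_mulVec]

theorem Matrix.eigenvalues_transpose_mul_self_nonneg {m n : Type*} [Fintype m] [Fintype n]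
    [DecidableEq n] {A : Matrix m n ℝ} (hAA : (Aᵀ * A).IsHermitian) (i : n) :
    0 ≤ hAA.eigenvalues i :=
  (by simpa using posSemidef_conjTranspose_mul_self A : (Aᵀ * A).PosSemidef).eigenvalues_nonneg i

namespace Matrix.IsHermitian

variable {n : Type*} [Fintype n] [DecidableEq n] {M : Matrix n n ℝ}

theorem dotProduct_mulVec_eq_sum_eigenvalues (hM : M.IsHermitian) (x : n → ℝ) :
    x ⬝ᵥ M *ᵥ x =
      ∑ i, hM.eigenvalues i * (star (hM.eigenvectorUnitary : Matrix n n ℝ) *ᵥ x) i ^ 2 := by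
  conv_lhs => rw [hM.spectral_theorem, Unitary.conjStarAlgAut_apply]
  rw [← mulVec_mulVec, ← mulVec_mulVec, dotProduct_mulVec, ← mulVec_transpose]
  simp only [dotProduct, RCLike.ofReal_real_eq_id, CompTriple.comp_eq, star_eq_conjTranspose,
    conjTranspose_eq_transpose_of_trivial, mulVec_diagonal, sq]
  exact Finset.sum_congr rfl fun i _ => by ring

theorem mul_dotProduct_self_le_dotProduct_mulVec (hM : M.IsHermitian) {c : ℝ}
    (hc : ∀ i, c ≤ hM.eigenvalues i) (x : n → ℝ) : c * (x ⬝ᵥ x) ≤ x ⬝ᵥ M *ᵥ x := by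
  rw [hM.dotProduct_mulVec_eq_sum_eigenvalues,
    ← dotProduct_mulVec_self_of_mem_unitaryGroup (Unitary.star_mem hM.eigenvectorUnitary.2) x,
    dotProduct, Finset.mul_sum]
  refine Finset.sum_le_sum fun i _ => ?_
  rw [← sq]
  exact mul_le_mul_of_nonneg_right (hc i) (sq_nonneg _)

theorem dotProduct_mulVec_le_mul_dotProduct_self (hM : M.IsHermitian) {c : ℝ}
    (hc : ∀ i, hM.eigenvalues i ≤ c) (x : n → ℝ) : x ⬝ᵥ M *ᵥ x ≤ c * (x ⬝ᵥ x) := by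
  rw [hM.dotProduct_mulVec_eq_sum_eigenvalues,
    ← dotProduct_mulVec_self_of_mem_unitaryGroup (Unitary.star_mem hM.eigenvectorUnitary.2) x,
    dotProduct, Finset.mul_sum]
  refine Finset.sum_le_sum fun i _ => ?_
  rw [← sq]
  exact mul_le_mul_of_nonneg_right (hc i) (sq_nonneg _)

end Matrix.IsHermitian

section euclNorm

variable {N : ℕ}

theorem euclNorm_eq_sqrt_dotProduct (x : Fin N → ℝ) : euclNorm x = √(x ⬝ᵥ x) := by
  simp only [euclNorm, dotProduct, sq]

theorem euclNorm_eq_norm_toLp (x : Fin N → ℝ) : euclNorm x = ‖WithLp.toLp 2 x‖ := by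
  simp [euclNorm, EuclideanSpace.norm_eq]

theorem euclNorm_nonneg (x : Fin N → ℝ) : 0 ≤ euclNorm x := Real.sqrt_nonneg _

theorem euclNorm_sub_comm (x y : Fin N → ℝ) : euclNorm (x - y) = euclNorm (y - x) := by
  rw [euclNorm_eq_norm_toLp, euclNorm_eq_norm_toLp, WithLp.toLp_sub, WithLp.toLp_sub, norm_sub_rev]

theorem euclNorm_mulVec_eq_sqrt (A : Matrix (Fin N) (Fin N) ℝ) (x : Fin N → ℝ) :
    euclNorm (A *ᵥ x) = √(x ⬝ᵥ (Aᵀ * A) *ᵥ x) := by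
  rw [euclNorm_eq_sqrt_dotProduct, ← mulVec_mulVec, dotProduct_mulVec x Aᵀ, vecMul_transpose]

theorem mul_euclNorm_le_euclNorm_mulVec {A : Matrix (Fin N) (Fin N) ℝ}
    (hAA : (Aᵀ * A).IsHermitian) {ρ : ℝ} (hρ : 0 ≤ ρ) (hle : ∀ i, ρ ≤ √(hAA.eigenvalues i))
    (x : Fin N → ℝ) : ρ * euclNorm x ≤ euclNorm (A *ᵥ x) := by
  have hc : ∀ i, ρ ^ 2 ≤ hAA.eigenvalues i := fun i =>
    (Real.le_sqrt hρ (eigenvalues_transpose_mul_self_nonneg hAA i)).1 (hle i)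
  rw [euclNorm_mulVec_eq_sqrt, euclNorm_eq_sqrt_dotProduct, ← Real.sqrt_sq hρ,
    ← Real.sqrt_mul (sq_nonneg ρ)]
  exact Real.sqrt_le_sqrt (hAA.mul_dotProduct_self_le_dotProduct_mulVec hc x)

theorem euclNorm_mulVec_le_mul_euclNorm {A : Matrix (Fin N) (Fin N) ℝ}
    (hAA : (Aᵀ * A).IsHermitian) {ρ : ℝ} (hρ : 0 ≤ ρ) (hle : ∀ i, √(hAA.eigenvalues i) ≤ ρ)
    (x : Fin N → ℝ) : euclNorm (A *ᵥ x) ≤ ρ * euclNorm x := by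
  have hc : ∀ i, hAA.eigenvalues i ≤ ρ ^ 2 := fun i => (Real.sqrt_le_left hρ).1 (hle i)
  rw [euclNorm_mulVec_eq_sqrt, euclNorm_eq_sqrt_dotProduct, ← Real.sqrt_sq hρ,
    ← Real.sqrt_mul (sq_nonneg ρ)]
  exact Real.sqrt_le_sqrt (hAA.dotProduct_mulVec_le_mul_dotProduct_self hc x)

end euclNorm

namespace MeasureTheory.Integrable

variable {Ω : Type*} [MeasurableSpace Ω] {μ : Measure Ω} {N : ℕ} {g : Ω → Fin N → ℝ}

theorem euclNorm (hg : Integrable g μ) : Integrable (fun ω => euclNorm (g ω)) μ := by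
  simp only [euclNorm_eq_norm_toLp]
  exact ((PiLp.continuousLinearEquiv 2 ℝ _).symm.toContinuousLinearMap.integrable_comp hg).norm

theorem mulVec (A : Matrix (Fin N) (Fin N) ℝ) (hg : Integrable g μ) :
    Integrable (fun ω => A *ᵥ g ω) μ :=
  A.mulVecLin.toContinuousLinearMap.integrable_comp hg

end MeasureTheory.Integrable

theorem mul_integral_euclNorm_sub_le_of_integral_le {Ω : Type*} [MeasurableSpace Ω]
    {μ : Measure Ω} {N : ℕ} {A : Matrix (Fin N) (Fin N) ℝ} {ρmin ρmax : ℝ}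
    (hlo : ∀ x, ρmin * euclNorm x ≤ euclNorm (A *ᵥ x))
    (hhi : ∀ x, euclNorm (A *ᵥ x) ≤ ρmax * euclNorm x)
    {F αstar αL α : Ω → Fin N → ℝ} (hAαstar : ∀ ω, A *ᵥ αstar ω = F ω)
    (hαstar : Integrable αstar μ) (hαL : Integrable αL μ) (hα : Integrable α μ)
    (hmin : ∫ ω, euclNorm (A *ᵥ αL ω - F ω) ∂μ ≤ ∫ ω, euclNorm (A *ᵥ α ω - F ω) ∂μ) :
    ρmin * ∫ ω, euclNorm (αstar ω - αL ω) ∂μ ≤ ρmax * ∫ ω, euclNorm (α ω - αstar ω) ∂μ := by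
  have hres : ∀ β : Ω → Fin N → ℝ, ∀ ω, A *ᵥ β ω - F ω = A *ᵥ (β ω - αstar ω) := fun β ω => by
    rw [mulVec_sub, hAαstar]
  simp only [hres] at hmin
  rw [← integral_const_mul, ← integral_const_mul]
  calc ∫ ω, ρmin * euclNorm (αstar ω - αL ω) ∂μ
      ≤ ∫ ω, euclNorm (A *ᵥ (αL ω - αstar ω)) ∂μ := by
        refine integral_mono ((hαstar.sub hαL).euclNorm.const_mul _)
          ((hαL.sub hαstar).mulVec A).euclNorm fun ω => ?_
        rw [euclNorm_sub_comm]
        exact hlo _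
    _ ≤ ∫ ω, euclNorm (A *ᵥ (α ω - αstar ω)) ∂μ := hmin
    _ ≤ ∫ ω, ρmax * euclNorm (α ω - αstar ω) ∂μ :=
        integral_mono ((hα.sub hαstar).mulVec A).euclNorm
          ((hα.sub hαstar).euclNorm.const_mul _) fun ω => hhi _

theorem stmt3_general {Ω : Type*} [MeasurableSpace Ω] (μ : Measure Ω)
    {N : ℕ} (A : Matrix (Fin N) (Fin N) ℝ) (hAinv : IsUnit A)
    (hAA : (Aᵀ * A).IsHermitian) (ρmax ρmin : ℝ)
    (hρmax : IsGreatest (Set.range fun i => Real.sqrt (hAA.eigenvalues i)) ρmax)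
    (hρmin : IsLeast (Set.range fun i => Real.sqrt (hAA.eigenvalues i)) ρmin)
    (F : Ω → Fin N → ℝ) (hF : Integrable F μ)
    (αstar : Ω → Fin N → ℝ) (hαstar : αstar = fun ω => A⁻¹.mulVec (F ω))
    (S : Set (Ω → Fin N → ℝ)) (hSint : ∀ α ∈ S, Integrable α μ)
    (αL : Ω → Fin N → ℝ) (hαLmem : αL ∈ S)
    (hαLmin : ∀ α ∈ S, (∫ ω, euclNorm (A.mulVec (αL ω) - F ω) ∂μ)
        ≤ ∫ ω, euclNorm (A.mulVec (α ω) - F ω) ∂μ) :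
    (∫ ω, euclNorm (αstar ω - αL ω) ∂μ)
      ≤ 3 * (ρmax / ρmin) ^ 2 * ⨅ α : S, ∫ ω, euclNorm ((α : Ω → Fin N → ℝ) ω - αstar ω) ∂μ := by
  have hAtA : (Aᵀ * A).PosDef := by
    simpa using PosDef.conjTranspose_mul_self A (mulVec_injective_iff_isUnit.mpr hAinv)
  have hρmin_pos : 0 < ρmin := by
    obtain ⟨i, rfl⟩ := hρmin.1
    exact Real.sqrt_pos.2 (hAtA.eigenvalues_pos i)
  have hκ : 1 ≤ ρmax / ρmin := (one_le_div hρmin_pos).2 (hρmax.2 hρmin.1)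
  have hAαstar : ∀ ω, A *ᵥ αstar ω = F ω := fun ω => by
    rw [hαstar, mulVec_mulVec, mul_nonsing_inv _ ((isUnit_iff_isUnit_det A).mp hAinv), one_mulVec]
  have hαstar_int : Integrable αstar μ := hαstar ▸ hF.mulVec A⁻¹
  have : Nonempty S := ⟨⟨αL, hαLmem⟩⟩
  rw [Real.mul_iInf_of_nonneg (by positivity)]
  refine le_ciInf fun ⟨α, hα⟩ => ?_
  have hquasi := mul_integral_euclNorm_sub_le_of_integral_le
    (mul_euclNorm_le_euclNorm_mulVec hAA hρmin_pos.le fun i => hρmin.2 ⟨i, rfl⟩)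
    (euclNorm_mulVec_le_mul_euclNorm hAA (hρmin_pos.le.trans (hρmax.2 hρmin.1))
      fun i => hρmax.2 ⟨i, rfl⟩)
    hAαstar hαstar_int (hSint αL hαLmem) (hSint α hα) (hαLmin α hα)
  have hJ : 0 ≤ ∫ ω, euclNorm (α ω - αstar ω) ∂μ := integral_nonneg fun ω => euclNorm_nonneg _
  calc ∫ ω, euclNorm (αstar ω - αL ω) ∂μ
      ≤ ρmax / ρmin * ∫ ω, euclNorm (α ω - αstar ω) ∂μ := by
        rw [div_mul_eq_mul_div, le_div_iff₀ hρmin_pos]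
        linarith
    _ ≤ 3 * (ρmax / ρmin) ^ 2 * ∫ ω, euclNorm (α ω - αstar ω) ∂μ := by
        gcongr
        nlinarith

/-- Let `(Ω, μ)` be a probability space, `A` an invertible `N×N` real matrix with largest and
smallest singular values `ρmax` and `ρmin` (the square roots of the eigenvalues of `AᵀA`),
`F : Ω → ℝ^N` Bochner integrable, and `α* = A⁻¹ F`. Let `S` be a nonempty set of integrable
functions `Ω → ℝ^N`, `αL ∈ S` a minimizer over `S` of the population loss
`L(α) = ∫ |Aα(ω) − F(ω)|₂ dμ`, and `αH ∈ S` a minimizer over `S` of the normal-equation loss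
`H(α) = ∫ |AᵀAα(ω) − AᵀF(ω)|₂ dμ`. Then
`‖α* − αL‖_{L¹(Ω)} ≤ 3 κ(A)² inf_{α ∈ S} ‖α − α*‖_{L¹(Ω)}` where `κ(A) = ρmax / ρmin`. -/
theorem stmt3 {Ω : Type*} [MeasurableSpace Ω] (μ : Measure Ω) [IsProbabilityMeasure μ]
    {N : ℕ} (A : Matrix (Fin N) (Fin N) ℝ) (hAinv : IsUnit A)
    (hAA : (Aᵀ * A).IsHermitian) (ρmax ρmin : ℝ)
    (hρmax : IsGreatest (Set.range fun i => Real.sqrt (hAA.eigenvalues i)) ρmax)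
    (hρmin : IsLeast (Set.range fun i => Real.sqrt (hAA.eigenvalues i)) ρmin)
    (F : Ω → Fin N → ℝ) (hF : Integrable F μ)
    (αstar : Ω → Fin N → ℝ) (hαstar : αstar = fun ω => A⁻¹.mulVec (F ω))
    (S : Set (Ω → Fin N → ℝ)) (hSne : S.Nonempty) (hSint : ∀ α ∈ S, Integrable α μ)
    (αL : Ω → Fin N → ℝ) (hαLmem : αL ∈ S)
    (hαLmin : ∀ α ∈ S, (∫ ω, euclNorm (A.mulVec (αL ω) - F ω) ∂μ)
        ≤ ∫ ω, euclNorm (A.mulVec (α ω) - F ω) ∂μ)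
    (αH : Ω → Fin N → ℝ) (hαHmem : αH ∈ S)
    (hαHmin : ∀ α ∈ S, (∫ ω, euclNorm ((Aᵀ * A).mulVec (αH ω) - Aᵀ.mulVec (F ω)) ∂μ)
        ≤ ∫ ω, euclNorm ((Aᵀ * A).mulVec (α ω) - Aᵀ.mulVec (F ω)) ∂μ) :
    (∫ ω, euclNorm (αstar ω - αL ω) ∂μ)
      ≤ 3 * (ρmax / ρmin) ^ 2 * ⨅ α : S, ∫ ω, euclNorm ((α : Ω → Fin N → ℝ) ω - αstar ω) ∂μ :=
  stmt3_general μ A hAinv hAA ρmax ρmin hρmax hρmin F hF αstar hαstar S hSint αL hαLmem hαLmin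
end

section
/- Let (Ω, μ) be a probability space, b > 0, and 𝔽 a nonempty countable family of measurable functions f : Ω → R with |f| ≤ b for every f ∈ 𝔽. Let X₁, …, X_M be i.i.d. random variables with law μ and let ε₁, …, ε_M be i.i.d. uniform on {−1, +1}, independent of the X_i. Then E[ sup_{f∈𝔽} | (1/M) Σ_{j=1}^M f(X_j) − ∫_Ω f dμ | ] ≤ 2 R_M(𝔽), where R_M(𝔽) := E[ sup_{f∈𝔽} | (1/M) Σ_{j=1}^M ε_j f(X_j) | ] is the Rademacher complexity of 𝔽. -/
/-!
Symmetrization with a ghost sample. Writing `S_f(X)` for the empirical mean of `f` over `X`,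
the true mean `∫ f dμ` is `E_Y S_f(Y)` for an independent copy `Y` of the sample, so Jensen's
inequality bounds the left-hand side by `E_{X,Y} sup_f |S_f(X) - S_f(Y)|`. Swapping `X j` and
`Y j` on the coordinates where `ε j = -1` preserves the law of `(X, Y)` and turns
`S_f(X) - S_f(Y)` into the difference of the two `ε`-signed means, which the triangle inequality
bounds by twice the expected signed supremum. This holds for every sign pattern `ε`, hence also
on average over `ε`.
-/

open MeasureTheory

section Supremum

variable {ι : Type*}

lemma bddAbove_range_abs_of_abs_le {g : ι → ℝ} {C : ℝ} (h : ∀ i, |g i| ≤ C) :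
    BddAbove (Set.range fun i => |g i|) :=
  ⟨C, by rintro _ ⟨i, rfl⟩; exact h i⟩

lemma iSup_abs_nonneg (g : ι → ℝ) : 0 ≤ ⨆ i, |g i| :=
  Real.iSup_nonneg fun _ => abs_nonneg _

lemma Real.biSup_eq_iSup_subtype {α : Type*} {s : Set α} {φ : α → ℝ} (hφ : ∀ x, 0 ≤ φ x) :
    ⨆ x ∈ s, φ x = ⨆ x : s, φ x := by
  by_cases hb : BddAbove (Set.range fun x : s => φ x)
  · exact (ciSup_subtype_fun hb (Real.sSup_empty ▸ Real.iSup_nonneg fun x => hφ x)).symm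
  rw [Real.iSup_of_not_bddAbove hb]
  refine Real.iSup_of_not_bddAbove fun ⟨C, hC⟩ => hb ⟨C, ?_⟩
  rintro _ ⟨x, rfl⟩
  simpa [ciSup_pos x.2] using hC ⟨x, rfl⟩

end Supremum

section Mean

lemma abs_mean_le {M : ℕ} (hM : M ≠ 0) {v : Fin M → ℝ} {C : ℝ} (h : ∀ j, |v j| ≤ C) :
    |(M : ℝ)⁻¹ * ∑ j, v j| ≤ C := by
  have hM' : (0 : ℝ) < M := by positivity
  rw [abs_mul, abs_inv, Nat.abs_cast, inv_mul_le_iff₀ hM']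
  calc |∑ j, v j| ≤ ∑ j, |v j| := Finset.abs_sum_le_sum_abs _ _
    _ ≤ ∑ _j : Fin M, C := Finset.sum_le_sum fun j _ => h j
    _ = M * C := by simp

lemma abs_sign_mul (e : Bool) (x : ℝ) : |(if e then (1 : ℝ) else -1) * x| = |x| := by
  cases e <;> simp

lemma abs_signedMean_le {Ω ι : Type*} {F : ι → Ω → ℝ} {b : ℝ} (hFb : ∀ i ω, |F i ω| ≤ b)
    {M : ℕ} (hM : M ≠ 0) (ε : Fin M → Bool) (i : ι) (X : Fin M → Ω) :
    |(M : ℝ)⁻¹ * ∑ j, (if ε j then (1 : ℝ) else -1) * F i (X j)| ≤ b :=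
  abs_mean_le hM fun j => (abs_sign_mul _ _).trans_le (hFb i (X j))

variable {Ω : Type*} [MeasurableSpace Ω] (μ : Measure Ω) [IsProbabilityMeasure μ]

lemma integral_mean_pi {f : Ω → ℝ} (hf : Integrable f μ) {M : ℕ} (hM : M ≠ 0) :
    ∫ X : Fin M → Ω, (M : ℝ)⁻¹ * ∑ j, f (X j) ∂(Measure.pi fun _ => μ) = ∫ ω, f ω ∂μ := by
  have hcoord : ∀ j : Fin M, ∫ X : Fin M → Ω, f (X j) ∂(Measure.pi fun _ => μ) = ∫ ω, f ω ∂μ :=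
    fun j => integral_comp_eval hf.aestronglyMeasurable
  rw [integral_const_mul, integral_finsetSum _ fun j _ => integrable_comp_eval hf]
  simp only [hcoord, Finset.sum_const, Finset.card_univ, Fintype.card_fin, nsmul_eq_mul]
  field_simp

end Mean

section Integral

variable {α ι : Type*} [MeasurableSpace α] [Countable ι] {ν : Measure α}

lemma integrable_iSup_abs [IsFiniteMeasure ν] {g : ι → α → ℝ} (hg : ∀ i, Measurable (g i))
    {C : ℝ} (hC : ∀ i x, |g i x| ≤ C) : Integrable (fun x => ⨆ i, |g i x|) ν :=
  Integrable.of_bound (Measurable.iSup fun i => (hg i).abs).aestronglyMeasurable |C|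
    (ae_of_all _ fun x => by
      rw [Real.norm_eq_abs, abs_of_nonneg (iSup_abs_nonneg _)]
      exact Real.iSup_le (fun i => (hC i x).trans (le_abs_self C)) (abs_nonneg C))

variable [IsProbabilityMeasure ν]

lemma integral_iSup_abs_sub_integral_le {g : ι → α → ℝ} (hg : ∀ i, Measurable (g i)) {C : ℝ}
    (hC : ∀ i x, |g i x| ≤ C) :
    ∫ x, ⨆ i, |g i x - ∫ y, g i y ∂ν| ∂ν ≤ ∫ p, ⨆ i, |g i p.1 - g i p.2| ∂(ν.prod ν) := by
  have hdiff : ∀ i x y, |g i x - g i y| ≤ C + C := fun i x y =>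
    (abs_sub _ _).trans (add_le_add (hC i x) (hC i y))
  have hgi : ∀ i, Integrable (g i) ν := fun i =>
    Integrable.of_bound (hg i).aestronglyMeasurable C (ae_of_all _ (hC i))
  have habs_integral : ∀ i, |∫ y, g i y ∂ν| ≤ C := fun i => by
    simpa using norm_integral_le_of_norm_le_const (μ := ν) (f := g i) (ae_of_all _ (hC i))
  have hW : Integrable (fun p : α × α => ⨆ i, |g i p.1 - g i p.2|) (ν.prod ν) :=
    integrable_iSup_abs (fun i => by fun_prop) fun i p => hdiff i p.1 p.2
  rw [integral_prod _ hW]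
  refine integral_mono (integrable_iSup_abs (fun i => by fun_prop) fun i x =>
    (abs_sub _ _).trans (add_le_add (hC i x) (habs_integral i))) hW.integral_prod_left fun x => ?_
  have hWx : Integrable (fun y => ⨆ i, |g i x - g i y|) ν :=
    integrable_iSup_abs (fun i => by fun_prop) fun i y => hdiff i x y
  refine Real.iSup_le (fun i => ?_) (integral_nonneg fun y => iSup_abs_nonneg _)
  calc |g i x - ∫ y, g i y ∂ν| = |∫ y, (g i x - g i y) ∂ν| := by
        rw [integral_sub (integrable_const _) (hgi i), integral_const, probReal_univ, one_smul]
    _ ≤ ∫ y, |g i x - g i y| ∂ν := abs_integral_le_integral_abs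
    _ ≤ ∫ y, ⨆ i, |g i x - g i y| ∂ν :=
        integral_mono ((integrable_const _).sub (hgi i)).abs hWx fun y =>
          le_ciSup (bddAbove_range_abs_of_abs_le fun i => hdiff i x y) i

lemma integral_iSup_abs_sub_le {h : ι → α → ℝ} (hh : ∀ i, Measurable (h i)) {C : ℝ}
    (hC : ∀ i x, |h i x| ≤ C) :
    ∫ p, ⨆ i, |h i p.1 - h i p.2| ∂(ν.prod ν) ≤ 2 * ∫ x, ⨆ i, |h i x| ∂ν := by
  have hR : Integrable (fun x => ⨆ i, |h i x|) ν := integrable_iSup_abs hh hC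
  have hsplit : ∀ p : α × α, ⨆ i, |h i p.1 - h i p.2| ≤ (⨆ i, |h i p.1|) + ⨆ i, |h i p.2| :=
    fun p => Real.iSup_le (fun i => (abs_sub _ _).trans (add_le_add
      (le_ciSup (bddAbove_range_abs_of_abs_le (hC · p.1)) i)
      (le_ciSup (bddAbove_range_abs_of_abs_le (hC · p.2)) i)))
      (add_nonneg (iSup_abs_nonneg _) (iSup_abs_nonneg _))
  calc ∫ p, ⨆ i, |h i p.1 - h i p.2| ∂(ν.prod ν)
      ≤ ∫ p, ((⨆ i, |h i p.1|) + ⨆ i, |h i p.2|) ∂(ν.prod ν) :=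
        integral_mono (integrable_iSup_abs (fun i => by fun_prop) fun i p =>
          (abs_sub _ _).trans (add_le_add (hC i p.1) (hC i p.2)))
          ((hR.comp_fst ν).add (hR.comp_snd ν)) hsplit
    _ = 2 * ∫ x, ⨆ i, |h i x| ∂ν := by
        rw [integral_add (hR.comp_fst ν) (hR.comp_snd ν),
          integral_fun_fst (fun x => ⨆ i, |h i x|), integral_fun_snd (fun x => ⨆ i, |h i x|)]
        simp only [probReal_univ, one_smul]
        ring

end Integral

section Swap

variable {ι Ω : Type*}

def condSwap (ε : ι → Bool) (p : (ι → Ω) × (ι → Ω)) : (ι → Ω) × (ι → Ω) :=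
  (fun j => if ε j then p.1 j else p.2 j, fun j => if ε j then p.2 j else p.1 j)

lemma condSwap_involutive (ε : ι → Bool) : Function.Involutive (condSwap (Ω := Ω) ε) := by
  intro p
  ext j <;> by_cases h : ε j <;> simp [condSwap, h]

lemma sum_condSwap_sub_sum [Fintype ι] (ε : ι → Bool) (f : Ω → ℝ) (p : (ι → Ω) × (ι → Ω)) :
    ∑ j, f ((condSwap ε p).1 j) - ∑ j, f ((condSwap ε p).2 j) =
      ∑ j, (if ε j then (1 : ℝ) else -1) * f (p.1 j) -
        ∑ j, (if ε j then (1 : ℝ) else -1) * f (p.2 j) := by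
  simp only [← Finset.sum_sub_distrib]
  refine Finset.sum_congr rfl fun j _ => ?_
  by_cases h : ε j
  · simp [condSwap, h]
  · simp [condSwap, h]
    ring

variable [Fintype ι] [MeasurableSpace Ω] (μ : Measure Ω) [SigmaFinite μ]

lemma measurePreserving_condSwap (ε : ι → Bool) :
    MeasurePreserving (condSwap ε) ((Measure.pi fun _ : ι => μ).prod (Measure.pi fun _ => μ))
      ((Measure.pi fun _ : ι => μ).prod (Measure.pi fun _ => μ)) := by
  let P := MeasurableEquiv.arrowProdEquivProdArrow Ω Ω ι
  have hP : MeasurePreserving P _ _ :=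
    measurePreserving_arrowProdEquivProdArrow Ω Ω ι (fun _ => μ) (fun _ => μ)
  have hτ : MeasurePreserving (fun (q : ι → Ω × Ω) j => if ε j then q j else (q j).swap)
      (Measure.pi fun _ => μ.prod μ) (Measure.pi fun _ => μ.prod μ) :=
    measurePreserving_pi (f := fun j (a : Ω × Ω) => if ε j then a else a.swap) _ _ fun j => by
      by_cases h : ε j
      · simp only [h, if_true]
        exact MeasurePreserving.id _
      · simp only [h, Bool.false_eq_true, if_false]
        exact Measure.measurePreserving_swap
  convert hP.comp (hτ.comp (hP.symm P))
  funext p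
  ext j <;> by_cases h : ε j <;> simp [condSwap, P, MeasurableEquiv.arrowProdEquivProdArrow, h]

lemma integral_comp_condSwap (ε : ι → Bool) (W : (ι → Ω) × (ι → Ω) → ℝ) :
    ∫ p, W (condSwap ε p) ∂((Measure.pi fun _ : ι => μ).prod (Measure.pi fun _ => μ)) =
      ∫ p, W p ∂((Measure.pi fun _ : ι => μ).prod (Measure.pi fun _ => μ)) :=
  (measurePreserving_condSwap μ ε).integral_comp
    (MeasurableEquiv.ofInvolutive _ (condSwap_involutive ε)
      (measurePreserving_condSwap μ ε).measurable).measurableEmbedding W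

end Swap

section Symmetrization

variable {Ω ι : Type*} [MeasurableSpace Ω] (μ : Measure Ω) [IsProbabilityMeasure μ] [Countable ι]
  {F : ι → Ω → ℝ} {b : ℝ} {M : ℕ}

theorem integral_iSup_abs_mean_sub_integral_le_signed (hF : ∀ i, Measurable (F i))
    (hFb : ∀ i ω, |F i ω| ≤ b) (hM : M ≠ 0) (ε : Fin M → Bool) :
    ∫ X, ⨆ i, |(M : ℝ)⁻¹ * ∑ j, F i (X j) - ∫ ω, F i ω ∂μ| ∂(Measure.pi fun _ : Fin M => μ) ≤
      2 * ∫ X, ⨆ i, |(M : ℝ)⁻¹ * ∑ j, (if ε j then (1 : ℝ) else -1) * F i (X j)|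
        ∂(Measure.pi fun _ : Fin M => μ) := by
  set ν := Measure.pi fun _ : Fin M => μ
  set g : ι → (Fin M → Ω) → ℝ := fun i X => (M : ℝ)⁻¹ * ∑ j, F i (X j)
  set h : ι → (Fin M → Ω) → ℝ := fun i X =>
    (M : ℝ)⁻¹ * ∑ j, (if ε j then (1 : ℝ) else -1) * F i (X j)
  have hmean : ∀ i, ∫ ω, F i ω ∂μ = ∫ Y, g i Y ∂ν := fun i =>
    (integral_mean_pi μ (Integrable.of_bound (hF i).aestronglyMeasurable b
      (ae_of_all _ (hFb i))) hM).symm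
  have hswap : ∀ i p, g i (condSwap ε p).1 - g i (condSwap ε p).2 = h i p.1 - h i p.2 :=
    fun i p => by simp only [g, h, ← mul_sub, sum_condSwap_sub_sum]
  calc ∫ X, ⨆ i, |g i X - ∫ ω, F i ω ∂μ| ∂ν
      = ∫ X, ⨆ i, |g i X - ∫ Y, g i Y ∂ν| ∂ν := by simp only [hmean]
    _ ≤ ∫ p, ⨆ i, |g i p.1 - g i p.2| ∂(ν.prod ν) :=
        integral_iSup_abs_sub_integral_le (fun i => by fun_prop)
          fun i X => abs_mean_le hM fun j => hFb i (X j)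
    _ = ∫ p, ⨆ i, |g i (condSwap ε p).1 - g i (condSwap ε p).2| ∂(ν.prod ν) :=
        (integral_comp_condSwap μ ε fun p => ⨆ i, |g i p.1 - g i p.2|).symm
    _ = ∫ p, ⨆ i, |h i p.1 - h i p.2| ∂(ν.prod ν) := by simp only [hswap]
    _ ≤ 2 * ∫ X, ⨆ i, |h i X| ∂ν :=
        integral_iSup_abs_sub_le (fun i => by fun_prop) (abs_signedMean_le hFb hM ε)

theorem integral_iSup_abs_mean_sub_integral_le_rademacher (hF : ∀ i, Measurable (F i))
    (hFb : ∀ i ω, |F i ω| ≤ b) (hM : M ≠ 0) :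
    ∫ X, ⨆ i, |(M : ℝ)⁻¹ * ∑ j, F i (X j) - ∫ ω, F i ω ∂μ| ∂(Measure.pi fun _ : Fin M => μ) ≤
      2 * ∫ X, (2 ^ M : ℝ)⁻¹ * ∑ ε : Fin M → Bool,
          ⨆ i, |(M : ℝ)⁻¹ * ∑ j, (if ε j then (1 : ℝ) else -1) * F i (X j)|
        ∂(Measure.pi fun _ : Fin M => μ) := by
  set L := ∫ X, ⨆ i, |(M : ℝ)⁻¹ * ∑ j, F i (X j) - ∫ ω, F i ω ∂μ| ∂(Measure.pi fun _ : Fin M => μ)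
  set R : (Fin M → Bool) → ℝ := fun ε => ∫ X, ⨆ i,
    |(M : ℝ)⁻¹ * ∑ j, (if ε j then (1 : ℝ) else -1) * F i (X j)| ∂(Measure.pi fun _ : Fin M => μ)
  have hR : ∀ ε : Fin M → Bool, Integrable (fun X : Fin M → Ω => ⨆ i,
      |(M : ℝ)⁻¹ * ∑ j, (if ε j then (1 : ℝ) else -1) * F i (X j)|)
      (Measure.pi fun _ : Fin M => μ) :=
    fun ε => integrable_iSup_abs (fun i => by fun_prop) (abs_signedMean_le hFb hM ε)
  have hsum : 2 ^ M * L ≤ ∑ ε, 2 * R ε := by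
    simpa using Finset.card_nsmul_le_sum Finset.univ (fun ε => 2 * R ε) L fun ε _ =>
      integral_iSup_abs_mean_sub_integral_le_signed μ hF hFb hM ε
  rw [← Finset.mul_sum] at hsum
  rw [integral_const_mul, integral_finsetSum _ fun ε _ => hR ε]
  calc L = (2 ^ M)⁻¹ * (2 ^ M * L) := by field_simp
    _ ≤ (2 ^ M)⁻¹ * (2 * ∑ ε, R ε) := by gcongr
    _ = 2 * ((2 ^ M)⁻¹ * ∑ ε, R ε) := by ring

end Symmetrization

theorem stmt5_general {Ω : Type*} [MeasurableSpace Ω] (μ : Measure Ω) [IsProbabilityMeasure μ]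
    (b : ℝ)
    (𝔽 : Set (Ω → ℝ)) (h𝔽ct : 𝔽.Countable)
    (hmeas : ∀ f ∈ 𝔽, Measurable f) (hbdd : ∀ f ∈ 𝔽, ∀ ω, |f ω| ≤ b)
    (M : ℕ) (hM : 0 < M) :
    (∫ X : Fin M → Ω, (⨆ f ∈ 𝔽, |(M : ℝ)⁻¹ * (∑ j, f (X j)) - ∫ ω, f ω ∂μ|)
        ∂(Measure.pi fun _ : Fin M => μ))
      ≤ 2 * ∫ X : Fin M → Ω, (2 ^ M : ℝ)⁻¹ * ∑ ε : Fin M → Bool,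
            ⨆ f ∈ 𝔽, |(M : ℝ)⁻¹ * ∑ j, (if ε j then (1 : ℝ) else -1) * f (X j)|
          ∂(Measure.pi fun _ : Fin M => μ) := by
  have : Countable 𝔽 := h𝔽ct.to_subtype
  simp only [Real.biSup_eq_iSup_subtype fun _ => abs_nonneg _]
  exact integral_iSup_abs_mean_sub_integral_le_rademacher μ (F := Subtype.val)
    (fun f => hmeas f f.2) (fun f => hbdd f f.2) hM.ne'

/-- Symmetrization: the expected supremum over a bounded countable family `𝔽` of the deviation
of the empirical mean from the true mean, over `M` i.i.d. samples, is bounded by twice the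
Rademacher complexity of `𝔽` (expectation over i.i.d. signs, uniform on `{−1, +1}`, given here
as the average over all `2^M` sign patterns `ε : Fin M → Bool`). -/
theorem stmt5 {Ω : Type*} [MeasurableSpace Ω] (μ : Measure Ω) [IsProbabilityMeasure μ]
    (b : ℝ) (hb : 0 < b)
    (𝔽 : Set (Ω → ℝ)) (h𝔽ne : 𝔽.Nonempty) (h𝔽ct : 𝔽.Countable)
    (hmeas : ∀ f ∈ 𝔽, Measurable f) (hbdd : ∀ f ∈ 𝔽, ∀ ω, |f ω| ≤ b)
    (M : ℕ) (hM : 0 < M) :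
    (∫ X : Fin M → Ω, (⨆ f ∈ 𝔽, |(M : ℝ)⁻¹ * (∑ j, f (X j)) - ∫ ω, f ω ∂μ|)
        ∂(Measure.pi fun _ : Fin M => μ))
      ≤ 2 * ∫ X : Fin M → Ω, (2 ^ M : ℝ)⁻¹ * ∑ ε : Fin M → Bool,
            ⨆ f ∈ 𝔽, |(M : ℝ)⁻¹ * ∑ j, (if ε j then (1 : ℝ) else -1) * f (X j)|
          ∂(Measure.pi fun _ : Fin M => μ) :=
  stmt5_general μ b 𝔽 h𝔽ct hmeas hbdd M hM
end

section
/- Let μ be a probability measure on R^m supported in the set { ω : ‖ω‖_∞ ≤ 1 }, let ρ be a probability measure on R × R^m × R with Q := ∫ |a| (‖b‖₁ + |c|) dρ(a,b,c) < ∞, and suppose g : R^m → R satisfies g(ω) = ∫ a σ(b·ω + c) dρ(a,b,c) for μ-almost every ω, where σ(t) = max(t, 0). Then for every n ∈ N there exist parameters (a_j, b_j, c_j)_{j=1}^n with (1/n) Σ_{j=1}^n |a_j| (‖b_j‖₁ + |c_j|) ≤ 2Q such that ∫_{R^m} | g(ω) − (1/n) Σ_{j=1}^n a_j σ(b_j·ω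 + c_j) |² dμ(ω) ≤ 3Q²/n. -/
/-!
Maurey's empirical method with importance sampling. Reweighting `ρ` by the density
`|a| (‖b‖₁ + |c|) / Q` and dividing the outer weight `a` by that density writes `g` as the mean,
under a probability measure `ν`, of neurons of path norm at most `Q`, hence bounded by `Q` on the
cube. The empirical mean of `n` independent samples from `ν` has mean-square error equal to a
variance divided by `n`, so at most `Q² / n`; averaging over the samples and over `μ`, some fixed
sample does at least as well.
-/

open MeasureTheory ProbabilityTheory

section SampleMean

variable {P : Type*} [MeasurableSpace P] (ν : Measure P) [IsProbabilityMeasure ν] {X : P → ℝ}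

lemma memLp_sampleMean (hX : MemLp X 2 ν) (n : ℕ) :
    MemLp (fun θ : Fin n → P => (n : ℝ)⁻¹ * ∑ j, X (θ j)) 2 (Measure.pi fun _ => ν) :=
  (memLp_finsetSum _ fun j _ =>
    hX.comp_measurePreserving (measurePreserving_eval (fun _ => ν) j)).const_mul _

lemma integral_sampleMean (hX : Integrable X ν) {n : ℕ} (hn : 0 < n) :
    ∫ θ : Fin n → P, (n : ℝ)⁻¹ * ∑ j, X (θ j) ∂(Measure.pi fun _ => ν) = ∫ p, X p ∂ν := by
  rw [integral_const_mul, integral_finsetSum _ fun j _ => integrable_comp_eval hX]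
  simp only [integral_comp_eval (μ := fun _ => ν) hX.aestronglyMeasurable, Finset.sum_const,
    Finset.card_univ, Fintype.card_fin, nsmul_eq_mul]
  field_simp

lemma variance_sampleMean (hX : MemLp X 2 ν) (n : ℕ) :
    Var[fun θ : Fin n → P => (n : ℝ)⁻¹ * ∑ j, X (θ j); Measure.pi fun _ => ν]
      = Var[X; ν] / n := by
  rw [variance_const_mul]
  have := variance_sum_pi (μ := fun _ : Fin n => ν) (X := fun _ => X) (fun _ => hX)
  simp only [Finset.sum_fn] at this
  rw [this, Finset.sum_const, Finset.card_univ, Fintype.card_fin, nsmul_eq_mul]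
  rcases n.eq_zero_or_pos with rfl | hn
  · simp
  · field_simp

lemma integral_sq_sub_sampleMean (hX : MemLp X 2 ν) {n : ℕ} (hn : 0 < n) :
    ∫ θ : Fin n → P, (∫ p, X p ∂ν - (n : ℝ)⁻¹ * ∑ j, X (θ j)) ^ 2 ∂(Measure.pi fun _ => ν)
      = Var[X; ν] / n := by
  rw [← variance_sampleMean ν hX n,
    variance_eq_integral (memLp_sampleMean ν hX n).aestronglyMeasurable.aemeasurable,
    integral_sampleMean ν (hX.integrable one_le_two) hn]
  simp only [sub_sq_comm]

end SampleMean

lemma exists_integral_le_of_ae_integral_le {α β : Type*} [MeasurableSpace α] [MeasurableSpace β]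
    {ν : Measure α} [IsProbabilityMeasure ν] {μ : Measure β} [IsProbabilityMeasure μ]
    {F : α → β → ℝ} (hF : Measurable (Function.uncurry F)) (hF0 : ∀ a b, 0 ≤ F a b)
    {c : ℝ} (hc0 : 0 ≤ c) (hc : ∀ᵐ b ∂μ, Integrable (F · b) ν ∧ ∫ a, F a b ∂ν ≤ c) :
    ∃ a, ∫ b, F a b ∂μ ≤ c := by
  have hF' : Measurable (Function.uncurry fun a b => ENNReal.ofReal (F a b)) :=
    ENNReal.measurable_ofReal.comp hF
  have hmean : ∫⁻ a, ∫⁻ b, ENNReal.ofReal (F a b) ∂μ ∂ν ≤ ENNReal.ofReal c := by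
    rw [lintegral_lintegral_swap hF'.aemeasurable]
    calc _ ≤ ∫⁻ _ : β, ENNReal.ofReal c ∂μ := lintegral_mono_ae <| hc.mono fun b hb => by
          rw [← ofReal_integral_eq_lintegral_ofReal hb.1 (ae_of_all _ (hF0 · b))]
          exact ENNReal.ofReal_le_ofReal hb.2
      _ = ENNReal.ofReal c := by simp
  obtain ⟨a, ha⟩ := exists_le_lintegral (μ := ν) (hF'.lintegral_prod_right' (ν := μ)).aemeasurable
  refine ⟨a, ?_⟩
  rw [integral_eq_lintegral_of_nonneg_ae (ae_of_all _ (hF0 a))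
    (hF.comp measurable_prodMk_left).aestronglyMeasurable]
  exact ENNReal.toReal_le_of_le_ofReal hc0 (ha.trans hmean)

theorem exists_integral_sq_sub_sampleMean_le {P Ω : Type*} [MeasurableSpace P] [MeasurableSpace Ω]
    (ν : Measure P) [IsProbabilityMeasure ν] (μ : Measure Ω) [IsProbabilityMeasure μ]
    {f : P → Ω → ℝ} (hf : Measurable (Function.uncurry f)) {B : ℝ}
    (hB : ∀ᵐ ω ∂μ, ∀ p, |f p ω| ≤ B) {G : Ω → ℝ} (hG : ∀ᵐ ω ∂μ, ∫ p, f p ω ∂ν = G ω)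
    {n : ℕ} (hn : 0 < n) :
    ∃ θ : Fin n → P, ∫ ω, (G ω - (n : ℝ)⁻¹ * ∑ j, f (θ j) ω) ^ 2 ∂μ ≤ B ^ 2 / n := by
  have hfω : ∀ ω, Measurable (f · ω) := fun ω => hf.comp (measurable_id.prodMk measurable_const)
  have hmean : Measurable fun ω => ∫ p, f p ω ∂ν :=
    (hf.comp measurable_swap).stronglyMeasurable.integral_prod_right'.measurable
  have hF : Measurable fun q : (Fin n → P) × Ω =>
      (∫ p, f p q.2 ∂ν - (n : ℝ)⁻¹ * ∑ j, f (q.1 j) q.2) ^ 2 := by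
    refine ((hmean.comp measurable_snd).sub
      ((Finset.measurable_sum _ fun j _ => ?_).const_mul _)).pow_const 2
    exact hf.comp (((measurable_pi_apply j).comp measurable_fst).prodMk measurable_snd :
      Measurable fun q : (Fin n → P) × Ω => (q.1 j, q.2))
  obtain ⟨θ, hθ⟩ := exists_integral_le_of_ae_integral_le (ν := Measure.pi fun _ : Fin n => ν)
    (μ := μ) (F := fun θ ω => (∫ p, f p ω ∂ν - (n : ℝ)⁻¹ * ∑ j, f (θ j) ω) ^ 2)
    (c := B ^ 2 / n) hF (fun _ _ => sq_nonneg _) (by positivity) <| hB.mono fun ω hω => by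
      have hX : MemLp (f · ω) 2 ν := MemLp.of_bound (hfω ω).aestronglyMeasurable B (ae_of_all _ hω)
      refine ⟨((memLp_const _).sub (memLp_sampleMean ν hX n)).integrable_sq, ?_⟩
      rw [integral_sq_sub_sampleMean ν hX hn]
      have hVar := variance_le_sq_of_bounded (μ := ν) (a := -B) (b := B)
        (ae_of_all _ fun p => abs_le.mp (hω p)) (hfω ω).aemeasurable
      rw [show ((B - -B) / 2) ^ 2 = B ^ 2 by ring] at hVar
      exact div_le_div_of_nonneg_right hVar n.cast_nonneg
  refine ⟨θ, le_of_eq_of_le (integral_congr_ae ?_) hθ⟩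
  filter_upwards [hG] with ω hω
  rw [hω]

section ImportanceSampling

variable {P : Type*} [MeasurableSpace P] (ρ : Measure P) {w : P → ℝ}

lemma isProbabilityMeasure_withDensity_ofReal (hw : Integrable w ρ) (hw0 : 0 ≤ᵐ[ρ] w)
    (h1 : ∫ p, w p ∂ρ = 1) :
    IsProbabilityMeasure (ρ.withDensity fun p => ENNReal.ofReal (w p)) := by
  constructor
  rw [withDensity_apply _ MeasurableSet.univ, setLIntegral_univ,
    ← ofReal_integral_eq_lintegral_ofReal hw hw0, h1, ENNReal.ofReal_one]

lemma integral_div_withDensity_ofReal (hw : Measurable w) (hw0 : 0 ≤ᵐ[ρ] w) {h : P → ℝ}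
    (hh : ∀ᵐ p ∂ρ, w p = 0 → h p = 0) :
    ∫ p, h p / w p ∂ρ.withDensity (fun p => ENNReal.ofReal (w p)) = ∫ p, h p ∂ρ := by
  rw [integral_withDensity_eq_integral_toReal_smul hw.ennreal_ofReal
    (ae_of_all _ fun _ => ENNReal.ofReal_lt_top)]
  refine integral_congr_ae ?_
  filter_upwards [hw0, hh] with p hp0 hp
  rw [ENNReal.toReal_ofReal hp0, smul_eq_mul]
  rcases eq_or_ne (w p) 0 with hwp | hwp
  · simp [hwp, hp hwp]
  · exact mul_div_cancel₀ _ hwp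

end ImportanceSampling

section ReluNeuron

variable {m : ℕ}

def neuron (p : ℝ × (Fin m → ℝ) × ℝ) (ω : Fin m → ℝ) : ℝ :=
  p.1 * max ((∑ i, p.2.1 i * ω i) + p.2.2) 0

def pathWeight (p : ℝ × (Fin m → ℝ) × ℝ) : ℝ :=
  |p.1| * ((∑ i, |p.2.1 i|) + |p.2.2|)

lemma pathWeight_nonneg (p : ℝ × (Fin m → ℝ) × ℝ) : 0 ≤ pathWeight p := by
  unfold pathWeight; positivity

@[fun_prop]
lemma measurable_pathWeight : Measurable (pathWeight (m := m)) := by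
  unfold pathWeight; fun_prop

lemma measurable_neuron : Measurable (Function.uncurry (neuron (m := m))) := by
  unfold neuron; fun_prop

lemma relu_affine_le_of_abs_le_one (p : ℝ × (Fin m → ℝ) × ℝ) {ω : Fin m → ℝ}
    (hω : ∀ i, |ω i| ≤ 1) :
    max ((∑ i, p.2.1 i * ω i) + p.2.2) 0 ≤ (∑ i, |p.2.1 i|) + |p.2.2| := by
  refine max_le ?_ (by positivity)
  calc (∑ i, p.2.1 i * ω i) + p.2.2 ≤ (∑ i, |p.2.1 i * ω i|) + |p.2.2| :=
        add_le_add (Finset.sum_le_sum fun i _ => le_abs_self _) (le_abs_self _)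
    _ ≤ (∑ i, |p.2.1 i|) + |p.2.2| := by
        refine add_le_add_left (Finset.sum_le_sum fun i _ => ?_) _
        rw [abs_mul]
        exact mul_le_of_le_one_right (abs_nonneg _) (hω i)

lemma abs_neuron_le_pathWeight (p : ℝ × (Fin m → ℝ) × ℝ) {ω : Fin m → ℝ}
    (hω : ∀ i, |ω i| ≤ 1) : |neuron p ω| ≤ pathWeight p := by
  rw [neuron, pathWeight, abs_mul, abs_of_nonneg (le_max_right ((∑ i, p.2.1 i * ω i) + p.2.2) 0)]
  exact mul_le_mul_of_nonneg_left (relu_affine_le_of_abs_le_one p hω) (abs_nonneg _)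

lemma neuron_div_outer (p : ℝ × (Fin m → ℝ) × ℝ) (s : ℝ) (ω : Fin m → ℝ) :
    neuron (p.1 / s, p.2) ω = neuron p ω / s :=
  div_mul_eq_mul_div _ _ _

lemma pathWeight_div_outer (p : ℝ × (Fin m → ℝ) × ℝ) (s : ℝ) :
    pathWeight (p.1 / s, p.2) = pathWeight p / |s| := by
  simp only [pathWeight, abs_div, div_mul_eq_mul_div]

lemma pathWeight_div_pathWeight_div_le (p : ℝ × (Fin m → ℝ) × ℝ) {Q : ℝ} (hQ : 0 ≤ Q) :
    pathWeight (p.1 / (pathWeight p / Q), p.2) ≤ Q := by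
  rw [pathWeight_div_outer, abs_of_nonneg (div_nonneg (pathWeight_nonneg p) hQ)]
  rcases eq_or_ne (pathWeight p) 0 with h | h
  · simp [h, hQ]
  · rcases hQ.eq_or_lt with rfl | hQ
    · simp
    · rw [div_div_cancel₀ h]

lemma integral_neuron_eq_zero {ρ : Measure (ℝ × (Fin m → ℝ) × ℝ)}
    (hint : Integrable pathWeight ρ) (h0 : ∫ p, pathWeight p ∂ρ = 0) {ω : Fin m → ℝ}
    (hω : ∀ i, |ω i| ≤ 1) : ∫ p, neuron p ω ∂ρ = 0 := by
  refine integral_eq_zero_of_ae ?_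
  filter_upwards [(integral_eq_zero_iff_of_nonneg pathWeight_nonneg hint).mp h0] with p hp
  exact abs_nonpos_iff.mp ((abs_neuron_le_pathWeight p hω).trans_eq hp)

lemma integral_neuron_div_pathWeight {ρ : Measure (ℝ × (Fin m → ℝ) × ℝ)} {Q : ℝ} (hQ : 0 < Q)
    {ω : Fin m → ℝ} (hω : ∀ i, |ω i| ≤ 1) :
    ∫ p, neuron (p.1 / (pathWeight p / Q), p.2) ω
        ∂ρ.withDensity (fun p => ENNReal.ofReal (pathWeight p / Q))
      = ∫ p, neuron p ω ∂ρ := by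
  simp only [neuron_div_outer]
  refine integral_div_withDensity_ofReal ρ (by fun_prop)
    (ae_of_all _ fun p => div_nonneg (pathWeight_nonneg p) hQ.le) (ae_of_all _ fun p hp => ?_)
  rw [div_eq_zero_iff, or_iff_left hQ.ne'] at hp
  exact abs_nonpos_iff.mp (hp ▸ abs_neuron_le_pathWeight p hω)

end ReluNeuron

theorem stmt14_general {m : ℕ} (μ : Measure (Fin m → ℝ)) [IsProbabilityMeasure μ]
    (hμsupp : ∀ᵐ ω ∂μ, ∀ i, |ω i| ≤ 1)
    (ρ : Measure (ℝ × (Fin m → ℝ) × ℝ))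
    (hQint : Integrable (fun p : ℝ × (Fin m → ℝ) × ℝ =>
        |p.1| * ((∑ i, |p.2.1 i|) + |p.2.2|)) ρ)
    (Q : ℝ) (hQ : Q = ∫ p, |p.1| * ((∑ i, |p.2.1 i|) + |p.2.2|) ∂ρ)
    (g : (Fin m → ℝ) → ℝ)
    (hg : ∀ᵐ ω ∂μ, g ω = ∫ p, p.1 * max ((∑ i, p.2.1 i * ω i) + p.2.2) 0 ∂ρ) :
    ∀ n : ℕ, 0 < n → ∃ (a : Fin n → ℝ) (b : Fin n → Fin m → ℝ) (c : Fin n → ℝ),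
      (n : ℝ)⁻¹ * (∑ j, |a j| * ((∑ i, |b j i|) + |c j|)) ≤ 2 * Q ∧
      (∫ ω, (g ω - (n : ℝ)⁻¹ * ∑ j, a j * max ((∑ i, b j i * ω i) + c j) 0) ^ 2 ∂μ)
        ≤ 3 * Q ^ 2 / n := by
  intro n hn
  change Integrable pathWeight ρ at hQint
  change Q = ∫ p, pathWeight p ∂ρ at hQ
  change ∀ᵐ ω ∂μ, g ω = ∫ p, neuron p ω ∂ρ at hg
  rcases (hQ ▸ integral_nonneg pathWeight_nonneg : 0 ≤ Q).eq_or_lt with rfl | hQpos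
  · have hg0 : ∀ᵐ ω ∂μ, g ω = 0 := by
      filter_upwards [hg, hμsupp] with ω hgω hω
      exact hgω.trans (integral_neuron_eq_zero hQint hQ.symm hω)
    refine ⟨0, 0, 0, by simp, le_of_eq ?_⟩
    simpa using integral_eq_zero_of_ae (hg0.mono fun ω hω => by simp [hω])
  set ν := ρ.withDensity fun p => ENNReal.ofReal (pathWeight p / Q)
  have : IsProbabilityMeasure ν := isProbabilityMeasure_withDensity_ofReal ρ
    (hQint.div_const Q) (ae_of_all _ fun p => div_nonneg (pathWeight_nonneg p) hQpos.le)
    (by rw [integral_div, ← hQ, div_self hQpos.ne'])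
  obtain ⟨θ, hθ⟩ := exists_integral_sq_sub_sampleMean_le ν μ
    (f := fun p => neuron (p.1 / (pathWeight p / Q), p.2))
    (G := g) (measurable_neuron.comp (f := fun q : (ℝ × (Fin m → ℝ) × ℝ) × (Fin m → ℝ) =>
      ((q.1.1 / (pathWeight q.1 / Q), q.1.2), q.2)) (by fun_prop))
    (hμsupp.mono fun ω hω p => (abs_neuron_le_pathWeight _ hω).trans
      (pathWeight_div_pathWeight_div_le p hQpos.le))
    (by filter_upwards [hg, hμsupp] with ω hgω hω
        rw [hgω, integral_neuron_div_pathWeight hQpos hω]) hn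
  refine ⟨fun j => (θ j).1 / (pathWeight (θ j) / Q), fun j => (θ j).2.1, fun j => (θ j).2.2,
    ?_, hθ.trans (by gcongr; linarith [sq_nonneg Q])⟩
  calc (n : ℝ)⁻¹ * ∑ j, pathWeight ((θ j).1 / (pathWeight (θ j) / Q), (θ j).2)
      ≤ (n : ℝ)⁻¹ * ∑ _j : Fin n, Q := by
        gcongr with j
        exact pathWeight_div_pathWeight_div_le (θ j) hQpos.le
    _ = Q := by simp [(Nat.cast_pos.mpr hn).ne']
    _ ≤ 2 * Q := by linarith

/-- Barron's approximation theorem (Maurey argument): let `μ` be a probability measure on `ℝ^m`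
supported in `{ω : ‖ω‖_∞ ≤ 1}`, `ρ` a probability measure on `ℝ × ℝ^m × ℝ` with
`Q = ∫ |a| (‖b‖₁ + |c|) dρ < ∞`, and suppose `g(ω) = ∫ a σ(b·ω + c) dρ(a,b,c)` for `μ`-a.e.
`ω`, with `σ` the ReLU. Then for every `n ≥ 1` there are parameters `(a_j, b_j, c_j)_{j<n}`
with path norm `(1/n) Σ_j |a_j| (‖b_j‖₁ + |c_j|) ≤ 2Q` such that
`∫ |g(ω) − (1/n) Σ_j a_j σ(b_j·ω + c_j)|² dμ(ω) ≤ 3 Q² / n`. -/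
theorem stmt14 {m : ℕ} (μ : Measure (Fin m → ℝ)) [IsProbabilityMeasure μ]
    (hμsupp : ∀ᵐ ω ∂μ, ∀ i, |ω i| ≤ 1)
    (ρ : Measure (ℝ × (Fin m → ℝ) × ℝ)) [IsProbabilityMeasure ρ]
    (hQint : Integrable (fun p : ℝ × (Fin m → ℝ) × ℝ =>
        |p.1| * ((∑ i, |p.2.1 i|) + |p.2.2|)) ρ)
    (Q : ℝ) (hQ : Q = ∫ p, |p.1| * ((∑ i, |p.2.1 i|) + |p.2.2|) ∂ρ)
    (g : (Fin m → ℝ) → ℝ)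
    (hg : ∀ᵐ ω ∂μ, g ω = ∫ p, p.1 * max ((∑ i, p.2.1 i * ω i) + p.2.2) 0 ∂ρ) :
    ∀ n : ℕ, 0 < n → ∃ (a : Fin n → ℝ) (b : Fin n → Fin m → ℝ) (c : Fin n → ℝ),
      (n : ℝ)⁻¹ * (∑ j, |a j| * ((∑ i, |b j i|) + |c j|)) ≤ 2 * Q ∧
      (∫ ω, (g ω - (n : ℝ)⁻¹ * ∑ j, a j * max ((∑ i, b j i * ω i) + c j) 0) ^ 2 ∂μ)
        ≤ 3 * Q ^ 2 / n :=
  stmt14_general μ hμsupp ρ hQint Q hQ g hg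
end

section
/- Fix m, M ∈ N and Q > 0, and let x₁, …, x_M ∈ R^m satisfy ‖x_i‖_∞ ≤ 1 for all i. Let F_Q be the set of all functions f : R^m → R of the form f(x) = (1/n) Σ_{j=1}^n a_j σ(b_j·x + c_j) for some n ∈ N and parameters with path norm (1/n) Σ_{j=1}^n |a_j| (‖b_j‖₁ + |c_j|) ≤ Q, where σ(t) = max(t,0). Then 2^{−M} Σ_{ε ∈ {−1,+1}^M} sup_{f ∈ F_Q} | (1/M) Σ_{i=1}^M ε_i f(x_i) | ≤ 2Q √( 2 log(2m+2) / M ). (The supremum is finite since |f(x_i)| ≤ Q for all f ∈ F_Q.) -/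
/-!
Each neuron `a σ(b ⬝ x + c)` equals `a (‖b‖₁ + |c|) σ(u ⬝ (x, 1))` with `u` in the `ℓ¹` unit ball
of `ℝ^(m+1)`, so the Rademacher average of `F_Q` is at most `Q` times that of the unit neurons.
For these, the zero neuron makes the suprema nonnegative, so removing the absolute value costs a
factor `2`; the Ledoux–Talagrand contraction principle removes the `1`-Lipschitz ReLU; a linear
form on the `ℓ¹` ball is maximised at one of the `2(m+1)` vertices `±eₖ`; and Massart's finite
class lemma bounds the average maximum of `2(m+1)` Rademacher sums with entries in `[-1, 1]` by
`√(2 M log(2m+2))`.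
-/

open Finset

def rademacherSign (b : Bool) : ℝ := if b then 1 else -1

@[simp] lemma rademacherSign_true : rademacherSign true = 1 := rfl

@[simp] lemma rademacherSign_false : rademacherSign false = -1 := rfl

@[simp] lemma rademacherSign_not (b : Bool) : rademacherSign (!b) = -rademacherSign b := by
  cases b <;> simp

@[simp] lemma abs_rademacherSign (b : Bool) : |rademacherSign b| = 1 := by
  cases b <;> simp

lemma sum_le_sum_of_involutive {ι : Type*} [Fintype ι] {e : ι → ι}
    (he : Function.Involutive e) {F G : ι → ℝ} (h : ∀ x, F x + F (e x) ≤ G x + G (e x)) :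
    ∑ x, F x ≤ ∑ x, G x := by
  have hF : ∑ x, F (e x) = ∑ x, F x := Equiv.sum_comp (he.toPerm e) F
  have hG : ∑ x, G (e x) = ∑ x, G x := Equiv.sum_comp (he.toPerm e) G
  have := sum_le_sum fun x (_ : x ∈ univ) => h x
  rw [sum_add_distrib, sum_add_distrib, hF, hG] at this
  linarith

lemma iSup_add_iSup_neg_le_of_abs_sub_le {α : Type*} [Nonempty α] {f h A : α → ℝ}
    (hfh : ∀ u w, |h u - h w| ≤ |f u - f w|)
    (hf : BddAbove (Set.range fun u => f u + A u))
    (hf' : BddAbove (Set.range fun u => -f u + A u)) :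
    (⨆ u, h u + A u) + (⨆ u, -h u + A u) ≤ (⨆ u, f u + A u) + (⨆ u, -f u + A u) := by
  refine ciSup_add_ciSup_le fun u w => ?_
  have h₁ : f u + A u ≤ ⨆ v, f v + A v := le_ciSup hf u
  have h₂ : f w + A w ≤ ⨆ v, f v + A v := le_ciSup hf w
  have h₃ : -f u + A u ≤ ⨆ v, -f v + A v := le_ciSup hf' u
  have h₄ : -f w + A w ≤ ⨆ v, -f v + A v := le_ciSup hf' w
  have := (abs_le.1 (hfh u w)).2
  cases abs_cases (f u - f w) <;> linarith

section Rademacher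

variable {α : Type*} {M : ℕ}

noncomputable def rademacherSup (g : Fin M → α → ℝ) (ε : Fin M → Bool) : ℝ :=
  ⨆ u, ∑ i, rademacherSign (ε i) * g i u

lemma abs_sum_rademacherSign_mul_le {g : Fin M → α → ℝ} {C : ℝ} (hg : ∀ i u, |g i u| ≤ C)
    (ε : Fin M → Bool) (u : α) : |∑ i, rademacherSign (ε i) * g i u| ≤ M * C := by
  calc |∑ i, rademacherSign (ε i) * g i u| ≤ ∑ i, |rademacherSign (ε i) * g i u| :=
        abs_sum_le_sum_abs _ _
    _ ≤ ∑ _i : Fin M, C := sum_le_sum fun i _ => by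
        rw [abs_mul, abs_rademacherSign, one_mul]; exact hg i u
    _ = M * C := by simp

lemma bddAbove_range_sum_rademacherSign_mul {g : Fin M → α → ℝ} {C : ℝ}
    (hg : ∀ i u, |g i u| ≤ C) (ε : Fin M → Bool) :
    BddAbove (Set.range fun u => ∑ i, rademacherSign (ε i) * g i u) :=
  ⟨M * C, by rintro _ ⟨u, rfl⟩; exact (abs_le.1 (abs_sum_rademacherSign_mul_le hg ε u)).2⟩

/-- Paired with its flip at `j`, a sign pattern `ε` gives two sums that differ only in the sign
of their `j`-th term. -/
lemma sum_rademacherSup_update_le [Nonempty α] {g : Fin M → α → ℝ} {C : ℝ}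
    (hg : ∀ i u, |g i u| ≤ C) (j : Fin M) {h : α → ℝ}
    (hh : ∀ u w, |h u - h w| ≤ |g j u - g j w|) :
    ∑ ε, rademacherSup (Function.update g j h) ε ≤ ∑ ε, rademacherSup g ε := by
  classical
  refine sum_le_sum_of_involutive (e := fun ε => Function.update ε j (!ε j))
    (fun ε => by simp) fun ε => ?_
  set A : α → ℝ := fun u => ∑ i ∈ univ.erase j, rademacherSign (ε i) * g i u
  have split : ∀ (G : Fin M → α → ℝ), (∀ i ≠ j, G i = g i) → ∀ ε' : Fin M → Bool,
      (∀ i ≠ j, ε' i = ε i) → ∀ u,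
        ∑ i, rademacherSign (ε' i) * G i u = rademacherSign (ε' j) * G j u + A u := by
    intro G hG ε' hε' u
    rw [← add_sum_erase _ _ (mem_univ j)]
    refine congrArg _ (sum_congr rfl fun i hi => ?_)
    rw [hG i (ne_of_mem_erase hi), hε' i (ne_of_mem_erase hi)]
  have hupd : ∀ i ≠ j, Function.update g j h i = g i :=
    fun i hi => Function.update_of_ne hi _ _
  have hflip : ∀ i ≠ j, Function.update ε j (!ε j) i = ε i :=
    fun i hi => Function.update_of_ne hi _ _
  have hbdd := bddAbove_range_sum_rademacherSign_mul hg ε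
  have hbdd' := bddAbove_range_sum_rademacherSign_mul hg (Function.update ε j (!ε j))
  simp only [rademacherSup, split _ hupd _ hflip, split _ hupd ε (fun _ _ => rfl),
    split g (fun _ _ => rfl) _ hflip, split g (fun _ _ => rfl) ε (fun _ _ => rfl),
    Function.update_self, rademacherSign_not, neg_mul] at hbdd hbdd' ⊢
  refine iSup_add_iSup_neg_le_of_abs_sub_le (fun u w => ?_) hbdd hbdd'
  rw [← mul_sub, ← mul_sub, abs_mul, abs_mul, abs_rademacherSign, one_mul, one_mul]
  exact hh u w

/-- The Ledoux–Talagrand contraction principle: each coordinate is replaced in turn. -/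
theorem sum_rademacherSup_comp_le [Nonempty α] {φ : ℝ → ℝ} (hφ : LipschitzWith 1 φ)
    {t : Fin M → α → ℝ} {C : ℝ} (ht : ∀ i u, |t i u| ≤ C) :
    ∑ ε, rademacherSup (fun i u => φ (t i u)) ε ≤ ∑ ε, rademacherSup t ε := by
  classical
  have hφ' : ∀ a b, |φ a - φ b| ≤ |a - b| := fun a b => by
    simpa [Real.dist_eq] using hφ.dist_le_mul a b
  set ψ : Finset (Fin M) → Fin M → α → ℝ := fun s i u => if i ∈ s then φ (t i u) else t i u
  have hψ : ∀ s i u, |ψ s i u| ≤ |φ 0| + C := by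
    intro s i u
    have h₁ := hφ' (t i u) 0
    have h₂ := ht i u
    have h₃ := abs_sub_abs_le_abs_sub (φ (t i u)) (φ 0)
    simp only [sub_zero] at h₁
    by_cases hi : i ∈ s <;> simp only [ψ, hi, if_true, if_false] <;>
      linarith [abs_nonneg (φ 0)]
  suffices ∀ s, ∑ ε, rademacherSup (ψ s) ε ≤ ∑ ε, rademacherSup t ε by
    simpa [ψ] using this univ
  intro s
  induction s using Finset.induction_on with
  | empty => simp [ψ]
  | insert j s hj ih =>
    have hinsert : ψ (insert j s) = Function.update (ψ s) j fun u => φ (t j u) := by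
      funext i u
      by_cases hi : i = j <;> simp [ψ, hi, hj]
    rw [hinsert]
    refine (sum_rademacherSup_update_le (hψ s) j fun u w => ?_).trans ih
    simpa [ψ, hj] using hφ' (t j u) (t j w)

/-- Flipping all signs turns `-∑` into `∑`, and `u₀` makes the suprema nonnegative. -/
lemma sum_iSup_abs_le_two_mul_sum_rademacherSup {g : Fin M → α → ℝ} {C : ℝ}
    (hg : ∀ i u, |g i u| ≤ C) (u₀ : α) (hu₀ : ∀ i, g i u₀ = 0) :
    ∑ ε : Fin M → Bool, ⨆ u, |∑ i, rademacherSign (ε i) * g i u|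
      ≤ 2 * ∑ ε, rademacherSup g ε := by
  have : Nonempty α := ⟨u₀⟩
  have hnonneg : ∀ ε, 0 ≤ rademacherSup g ε := fun ε => by
    have := le_ciSup (bddAbove_range_sum_rademacherSign_mul hg ε) u₀
    simpa [rademacherSup, hu₀] using this
  have habs : ∀ ε : Fin M → Bool, (⨆ u, |∑ i, rademacherSign (ε i) * g i u|)
      ≤ rademacherSup g ε + rademacherSup g (fun i => !ε i) := by
    intro ε
    refine ciSup_le fun u => ?_
    have h₁ : ∑ i, rademacherSign (ε i) * g i u ≤ rademacherSup g ε :=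
      le_ciSup (bddAbove_range_sum_rademacherSign_mul hg ε) u
    have h₂ : ∑ i, rademacherSign (!ε i) * g i u ≤ rademacherSup g (fun i => !ε i) :=
      le_ciSup (bddAbove_range_sum_rademacherSign_mul hg _) u
    simp only [rademacherSign_not, neg_mul, sum_neg_distrib] at h₂
    cases abs_cases (∑ i, rademacherSign (ε i) * g i u) <;>
      linarith [hnonneg ε, hnonneg fun i => !ε i]
  rw [mul_sum]
  refine sum_le_sum_of_involutive (e := fun (ε : Fin M → Bool) i => !ε i) (fun ε => by simp)
    fun ε => ?_
  have h₁ := habs ε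
  have h₂ := habs fun i => !ε i
  simp only [Bool.not_not] at h₂
  linarith

def l1UnitBall (K : Type*) [Fintype K] : Set (K → ℝ) := {u | ∑ k, |u k| ≤ 1}

lemma zero_mem_l1UnitBall {K : Type*} [Fintype K] : (0 : K → ℝ) ∈ l1UnitBall K := by
  simp [l1UnitBall]

lemma abs_sum_mul_le_sum_abs_mul {K : Type*} [Fintype K] (u w : K → ℝ) {D : ℝ}
    (hw : ∀ k, |w k| ≤ D) : |∑ k, u k * w k| ≤ (∑ k, |u k|) * D :=
  calc |∑ k, u k * w k| ≤ ∑ k, |u k * w k| := abs_sum_le_sum_abs _ _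
    _ ≤ ∑ k, |u k| * D := sum_le_sum fun k _ => by
        rw [abs_mul]; exact mul_le_mul_of_nonneg_left (hw k) (abs_nonneg _)
    _ = (∑ k, |u k|) * D := (sum_mul _ _ _).symm

/-- A linear functional on the `ℓ¹` ball is maximised at one of the vertices `±eₖ`. -/
lemma rademacherSup_l1UnitBall_le {K : Type*} [Fintype K] [Nonempty K] (V : Fin M → K → ℝ)
    (ε : Fin M → Bool) :
    rademacherSup (fun i (u : l1UnitBall K) => ∑ k, u.1 k * V i k) ε
      ≤ rademacherSup (fun i (p : K × Bool) => rademacherSign p.2 * V i p.1) ε := by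
  set D := rademacherSup (fun i (p : K × Bool) => rademacherSign p.2 * V i p.1) ε
  set w : K → ℝ := fun k => ∑ i, rademacherSign (ε i) * V i k
  have hw : ∀ k, |w k| ≤ D := by
    intro k
    have hbdd := (Set.finite_range
      fun p : K × Bool => ∑ i, rademacherSign (ε i) * (rademacherSign p.2 * V i p.1)).bddAbove
    have h₁ : _ ≤ D := le_ciSup hbdd (k, true)
    have h₂ : _ ≤ D := le_ciSup hbdd (k, false)
    simp only [rademacherSign_true, rademacherSign_false, one_mul, neg_one_mul, mul_neg,
      sum_neg_distrib] at h₁ h₂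
    exact abs_le.2 ⟨by linarith, h₁⟩
  have hD : 0 ≤ D := (abs_nonneg _).trans (hw (Classical.arbitrary K))
  have : Nonempty (l1UnitBall K) := ⟨⟨0, zero_mem_l1UnitBall⟩⟩
  refine ciSup_le fun u => ?_
  have hswap : ∑ i, rademacherSign (ε i) * ∑ k, u.1 k * V i k = ∑ k, u.1 k * w k := by
    simp only [w, mul_sum]
    rw [sum_comm]
    exact sum_congr rfl fun k _ => sum_congr rfl fun i _ => by ring
  calc ∑ i, rademacherSign (ε i) * ∑ k, u.1 k * V i k = ∑ k, u.1 k * w k := hswap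
    _ ≤ (∑ k, |u.1 k|) * D := (le_abs_self _).trans (abs_sum_mul_le_sum_abs_mul _ _ hw)
    _ ≤ 1 * D := mul_le_mul_of_nonneg_right u.2 hD
    _ = D := one_mul D

/-- Hoeffding's lemma for Rademacher signs, in the form `cosh x ≤ exp (x²/2)`. -/
lemma sum_exp_mul_sum_rademacherSign_mul_le (c : Fin M → ℝ) (hc : ∀ i, |c i| ≤ 1) (l : ℝ) :
    ∑ ε : Fin M → Bool, Real.exp (l * ∑ i, rademacherSign (ε i) * c i)
      ≤ 2 ^ M * Real.exp (M * l ^ 2 / 2) := by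
  have hcosh : ∀ i, ∑ b, Real.exp (l * (rademacherSign b * c i))
      ≤ 2 * Real.exp (l ^ 2 / 2) := by
    intro i
    have hsq : (l * c i) ^ 2 ≤ l ^ 2 := by
      rw [mul_pow]
      exact mul_le_of_le_one_right (sq_nonneg l) ((sq_le_one_iff_abs_le_one _).2 (hc i))
    calc ∑ b, Real.exp (l * (rademacherSign b * c i)) = 2 * Real.cosh (l * c i) := by
          rw [Fintype.sum_bool, Real.cosh_eq, rademacherSign_true, rademacherSign_false]
          ring_nf
      _ ≤ 2 * Real.exp ((l * c i) ^ 2 / 2) := by gcongr; exact Real.cosh_le_exp_half_sq _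
      _ ≤ 2 * Real.exp (l ^ 2 / 2) := by gcongr
  calc ∑ ε : Fin M → Bool, Real.exp (l * ∑ i, rademacherSign (ε i) * c i)
      = ∑ ε : Fin M → Bool, ∏ i, Real.exp (l * (rademacherSign (ε i) * c i)) := by
        simp only [mul_sum, Real.exp_sum]
    _ = ∏ i, ∑ b, Real.exp (l * (rademacherSign b * c i)) :=
        (Fintype.prod_sum fun i b => Real.exp (l * (rademacherSign b * c i))).symm
    _ ≤ ∏ _i : Fin M, 2 * Real.exp (l ^ 2 / 2) :=
        prod_le_prod (fun _ _ => by positivity) fun i _ => hcosh i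
    _ = 2 ^ M * Real.exp (M * l ^ 2 / 2) := by
        rw [prod_const, card_univ, Fintype.card_fin, mul_pow, ← Real.exp_nat_mul]
        ring_nf

/-- Jensen's inequality for `exp`, then the maximum over `J` is bounded by the sum. -/
lemma mul_avg_rademacherSup_le {J : Type*} [Fintype J] [Nonempty J] (c : Fin M → J → ℝ)
    (hc : ∀ i j, |c i j| ≤ 1) (l : ℝ) :
    l * ((2 ^ M)⁻¹ * ∑ ε, rademacherSup c ε)
      ≤ Real.log (Fintype.card J) + M * l ^ 2 / 2 := by
  have hjensen : Real.exp (l * ((2 ^ M)⁻¹ * ∑ ε, rademacherSup c ε))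
      ≤ ∑ ε : Fin M → Bool, (2 ^ M : ℝ)⁻¹ * Real.exp (l * rademacherSup c ε) := by
    have := convexOn_exp.map_sum_le (t := univ) (w := fun _ : Fin M → Bool => (2 ^ M : ℝ)⁻¹)
      (p := fun ε => l * rademacherSup c ε) (fun _ _ => by positivity)
      (by simp) (fun _ _ => Set.mem_univ _)
    simpa only [smul_eq_mul, ← mul_sum, mul_left_comm l] using this
  have hmax : ∀ ε, Real.exp (l * rademacherSup c ε)
      ≤ ∑ j, Real.exp (l * ∑ i, rademacherSign (ε i) * c i j) := by
    intro ε
    obtain ⟨j, hj⟩ :=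
      exists_eq_ciSup_of_finite (f := fun j => ∑ i, rademacherSign (ε i) * c i j)
    rw [rademacherSup, ← hj]
    exact single_le_sum (f := fun j => Real.exp (l * ∑ i, rademacherSign (ε i) * c i j))
      (fun _ _ => (Real.exp_pos _).le) (mem_univ j)
  have hbound : Real.exp (l * ((2 ^ M)⁻¹ * ∑ ε, rademacherSup c ε))
      ≤ Fintype.card J * Real.exp (M * l ^ 2 / 2) :=
    calc _ ≤ ∑ ε : Fin M → Bool, (2 ^ M : ℝ)⁻¹ * Real.exp (l * rademacherSup c ε) := hjensen
      _ ≤ (2 ^ M : ℝ)⁻¹ * ∑ j, ∑ ε : Fin M → Bool,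
            Real.exp (l * ∑ i, rademacherSign (ε i) * c i j) := by
          rw [sum_comm, ← mul_sum]
          exact mul_le_mul_of_nonneg_left (sum_le_sum fun ε _ => hmax ε) (by positivity)
      _ ≤ (2 ^ M : ℝ)⁻¹ * ∑ _j : J, 2 ^ M * Real.exp (M * l ^ 2 / 2) := by
          gcongr with j
          exact sum_exp_mul_sum_rademacherSign_mul_le _ (fun i => hc i j) l
      _ = Fintype.card J * Real.exp (M * l ^ 2 / 2) := by
          rw [sum_const, card_univ, nsmul_eq_mul]; field_simp
  rwa [← Real.le_log_iff_exp_le (by positivity), Real.log_mul (by positivity) (by positivity),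
    Real.log_exp] at hbound

/-- Massart's finite class lemma. -/
theorem avg_rademacherSup_le_sqrt {J : Type*} [Fintype J] (hM : 0 < M)
    (hJ : 1 < Fintype.card J) (c : Fin M → J → ℝ) (hc : ∀ i j, |c i j| ≤ 1) :
    (2 ^ M)⁻¹ * ∑ ε, rademacherSup c ε ≤ √(2 * M * Real.log (Fintype.card J)) := by
  have : Nonempty J := Fintype.card_pos_iff.1 (by omega)
  set avg := (2 ^ M : ℝ)⁻¹ * ∑ ε, rademacherSup c ε
  set L := Real.log (Fintype.card J)
  set a := √(2 * M * L)
  have hMpos : (0 : ℝ) < M := by exact_mod_cast hM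
  have hL : 0 < L := Real.log_pos (by exact_mod_cast hJ)
  have ha : 0 < a := Real.sqrt_pos.2 (by positivity)
  have ha2 : a * a = 2 * M * L := Real.mul_self_sqrt (by positivity)
  -- `l = a / M` balances the two terms of `mul_avg_rademacherSup_le`
  have h := mul_avg_rademacherSup_le c hc (a / M)
  have hbalance : (M : ℝ) * (a / M) ^ 2 / 2 = L := by
    field_simp
    linarith
  refine le_of_mul_le_mul_left ?_ ha
  calc a * avg = M * (a / M * avg) := by field_simp
    _ ≤ M * (L + L) := by gcongr; linarith
    _ = a * a := by linarith

lemma abs_relu_sum_mul_le_one {K : Type*} [Fintype K] {u v : K → ℝ} (hu : u ∈ l1UnitBall K)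
    (hv : ∀ k, |v k| ≤ 1) : |max (∑ k, u k * v k) 0| ≤ 1 := by
  have h : |∑ k, u k * v k| ≤ 1 :=
    (abs_sum_mul_le_sum_abs_mul u v hv).trans (by rw [mul_one]; exact hu)
  rw [abs_of_nonneg (le_max_right _ _)]
  exact max_le (abs_le.1 h).2 zero_le_one

noncomputable def unitNeuronSup {K : Type*} [Fintype K] (V : Fin M → K → ℝ)
    (ε : Fin M → Bool) : ℝ :=
  ⨆ u : l1UnitBall K, |∑ i, rademacherSign (ε i) * max (∑ k, u.1 k * V i k) 0|

lemma unitNeuronSup_nonneg {K : Type*} [Fintype K] (V : Fin M → K → ℝ) (ε : Fin M → Bool) :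
    0 ≤ unitNeuronSup V ε :=
  Real.iSup_nonneg fun _ => abs_nonneg _

lemma le_unitNeuronSup {K : Type*} [Fintype K] {V : Fin M → K → ℝ} (hV : ∀ i k, |V i k| ≤ 1)
    (ε : Fin M → Bool) {u : K → ℝ} (hu : u ∈ l1UnitBall K) :
    |∑ i, rademacherSign (ε i) * max (∑ k, u k * V i k) 0| ≤ unitNeuronSup V ε := by
  refine le_ciSup (f := fun u : l1UnitBall K =>
    |∑ i, rademacherSign (ε i) * max (∑ k, u.1 k * V i k) 0|) ⟨M * 1, ?_⟩ ⟨u, hu⟩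
  rintro _ ⟨v, rfl⟩
  exact abs_sum_rademacherSign_mul_le (fun i v => abs_relu_sum_mul_le_one v.2 (hV i)) ε v

theorem avg_unitNeuronSup_le {K : Type*} [Fintype K] [Nonempty K] (hM : 0 < M)
    (V : Fin M → K → ℝ) (hV : ∀ i k, |V i k| ≤ 1) :
    (2 ^ M)⁻¹ * ∑ ε, unitNeuronSup V ε ≤ 2 * √(2 * M * Real.log (2 * Fintype.card K)) := by
  set t : Fin M → l1UnitBall K → ℝ := fun i u => ∑ k, u.1 k * V i k
  have ht : ∀ i u, |t i u| ≤ 1 := fun i u =>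
    (abs_sum_mul_le_sum_abs_mul _ _ (hV i)).trans (by rw [mul_one]; exact u.2)
  have : Nonempty (l1UnitBall K) := ⟨⟨0, zero_mem_l1UnitBall⟩⟩
  have hcard : Fintype.card (K × Bool) = 2 * Fintype.card K := by
    rw [Fintype.card_prod, Fintype.card_bool, mul_comm]
  calc (2 ^ M)⁻¹ * ∑ ε, unitNeuronSup V ε
      ≤ (2 ^ M)⁻¹ * (2 * ∑ ε, rademacherSup (fun i u => max (t i u) 0) ε) := by
        gcongr
        exact sum_iSup_abs_le_two_mul_sum_rademacherSup
          (fun i u => abs_relu_sum_mul_le_one u.2 (hV i)) ⟨0, zero_mem_l1UnitBall⟩ (by simp)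
    _ ≤ (2 ^ M)⁻¹ * (2 * ∑ ε, rademacherSup t ε) := by
        gcongr (2 ^ M)⁻¹ * (2 * ?_)
        exact sum_rademacherSup_comp_le (φ := fun z => max z 0)
          (LipschitzWith.id.max_const 0) ht
    _ ≤ 2 * ((2 ^ M)⁻¹ * ∑ ε,
          rademacherSup (fun i (p : K × Bool) => rademacherSign p.2 * V i p.1) ε) := by
        rw [mul_left_comm]
        gcongr with ε
        exact rademacherSup_l1UnitBall_le V ε
    _ ≤ 2 * √(2 * M * Real.log (Fintype.card (K × Bool))) := by
        gcongr
        refine avg_rademacherSup_le_sqrt hM ?_ _ fun i p => ?_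
        · rw [hcard]; have := Fintype.card_pos (α := K); omega
        · rw [abs_mul, abs_rademacherSign, one_mul]; exact hV i p.1
    _ = 2 * √(2 * M * Real.log (2 * Fintype.card K)) := by rw [hcard]; push_cast; rfl

end Rademacher

lemma relu_eq_mul_relu_inv_mul {r z : ℝ} (hz : |z| ≤ r) : max z 0 = r * max (r⁻¹ * z) 0 := by
  rcases ((abs_nonneg z).trans hz).eq_or_lt with rfl | hr
  · simp [abs_nonpos_iff.1 hz]
  · rw [mul_max_of_nonneg _ _ hr.le, mul_inv_cancel_left₀ hr.ne', mul_zero]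

/-- `o.elim 1 y` is `y` with a constant coordinate `1` appended, which turns the affine map
`y ↦ b ⬝ y + c` into a linear one. -/
lemma exists_mem_l1UnitBall_relu_eq {m : ℕ} (b : Fin m → ℝ) (c : ℝ) :
    ∃ u ∈ l1UnitBall (Option (Fin m)), ∀ y : Fin m → ℝ, (∀ k, |y k| ≤ 1) →
      max (∑ k, b k * y k + c) 0 = (∑ k, |b k| + |c|) * max (∑ o, u o * o.elim 1 y) 0 := by
  set r := ∑ k, |b k| + |c|
  have hr : 0 ≤ r := by positivity
  refine ⟨fun o => r⁻¹ * o.elim c b, ?_, fun y hy => ?_⟩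
  · simp only [l1UnitBall, Set.mem_ofPred_eq, Fintype.sum_option, Option.elim, abs_mul,
      abs_inv, abs_of_nonneg hr, ← mul_sum, ← mul_add, add_comm |c|]
    exact inv_mul_le_one
  · have hz : |∑ k, b k * y k + c| ≤ r := by
      refine (abs_add_le _ _).trans (add_le_add ?_ le_rfl)
      simpa using abs_sum_mul_le_sum_abs_mul b y hy
    rw [relu_eq_mul_relu_inv_mul hz]
    simp only [Fintype.sum_option, Option.elim, mul_one, mul_assoc, ← mul_sum, add_comm c]

lemma abs_elim_one_le_one {m : ℕ} {y : Fin m → ℝ} (hy : ∀ k, |y k| ≤ 1) (o : Option (Fin m)) :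
    |o.elim 1 y| ≤ 1 := by
  cases o <;> simp [hy]

noncomputable def reluNet {m n : ℕ} (a : Fin n → ℝ) (b : Fin n → Fin m → ℝ) (c : Fin n → ℝ)
    (y : Fin m → ℝ) : ℝ :=
  (n : ℝ)⁻¹ * ∑ j, a j * max (∑ k, b j k * y k + c j) 0

noncomputable def pathNorm {m n : ℕ} (a : Fin n → ℝ) (b : Fin n → Fin m → ℝ) (c : Fin n → ℝ) :
    ℝ :=
  (n : ℝ)⁻¹ * ∑ j, |a j| * (∑ k, |b j k| + |c j|)

lemma abs_sum_rademacherSign_mul_reluNet_le {m n M : ℕ} (a : Fin n → ℝ)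
    (b : Fin n → Fin m → ℝ) (c : Fin n → ℝ) {x : Fin M → Fin m → ℝ} (hx : ∀ i k, |x i k| ≤ 1)
    (ε : Fin M → Bool) :
    |∑ i, rademacherSign (ε i) * reluNet a b c (x i)|
      ≤ pathNorm a b c * unitNeuronSup (fun i (o : Option (Fin m)) => o.elim 1 (x i)) ε := by
  set S := unitNeuronSup (fun i (o : Option (Fin m)) => o.elim 1 (x i)) ε
  set σ : Fin n → Fin M → ℝ := fun j i => max (∑ k, b j k * x i k + c j) 0
  have hneuron : ∀ j, |∑ i, rademacherSign (ε i) * σ j i| ≤ (∑ k, |b j k| + |c j|) * S := by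
    intro j
    obtain ⟨u, hu, hrelu⟩ := exists_mem_l1UnitBall_relu_eq (b j) (c j)
    simp only [σ, hrelu _ (hx _), mul_left_comm _ (∑ k, |b j k| + |c j|), ← mul_sum, abs_mul]
    rw [abs_of_nonneg (by positivity)]
    gcongr
    exact le_unitNeuronSup (fun i => abs_elim_one_le_one (hx i)) ε hu
  calc |∑ i, rademacherSign (ε i) * reluNet a b c (x i)|
      = |(n : ℝ)⁻¹ * ∑ j, a j * ∑ i, rademacherSign (ε i) * σ j i| := by
        simp only [reluNet, σ, mul_sum]
        rw [sum_comm]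
        exact congrArg _ (sum_congr rfl fun j _ => sum_congr rfl fun i _ => by ring)
    _ ≤ (n : ℝ)⁻¹ * ∑ j, |a j| * ((∑ k, |b j k| + |c j|) * S) := by
        rw [abs_mul, abs_of_nonneg (by positivity)]
        gcongr
        refine (abs_sum_le_sum_abs _ _).trans (sum_le_sum fun j _ => ?_)
        rw [abs_mul]
        gcongr
        exact hneuron j
    _ = pathNorm a b c * S := by
        simp only [pathNorm, mul_sum, sum_mul, mul_assoc]

lemma iSup_abs_inv_mul_sum_le_of_pathNorm_le {m M : ℕ} {x : Fin M → Fin m → ℝ}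
    (hx : ∀ i k, |x i k| ≤ 1) {Q : ℝ} (hQ : 0 ≤ Q) {F : Set ((Fin m → ℝ) → ℝ)}
    (hF : ∀ f ∈ F, ∃ (n : ℕ) (a : Fin n → ℝ) (b : Fin n → Fin m → ℝ) (c : Fin n → ℝ),
      pathNorm a b c ≤ Q ∧ f = reluNet a b c) (ε : Fin M → Bool) :
    ⨆ f ∈ F, |(M : ℝ)⁻¹ * ∑ i, rademacherSign (ε i) * f (x i)|
      ≤ (M : ℝ)⁻¹ * (Q * unitNeuronSup (fun i (o : Option (Fin m)) => o.elim 1 (x i)) ε) := by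
  have hS := unitNeuronSup_nonneg (fun i (o : Option (Fin m)) => o.elim 1 (x i)) ε
  refine Real.iSup_le (fun f => Real.iSup_le (fun hf => ?_) (by positivity)) (by positivity)
  obtain ⟨n, a, b, c, hpath, rfl⟩ := hF f hf
  rw [abs_mul, abs_of_nonneg (by positivity)]
  gcongr
  exact (abs_sum_rademacherSign_mul_reluNet_le a b c hx ε).trans
    (mul_le_mul_of_nonneg_right hpath hS)

lemma inv_mul_sqrt_mul {a : ℝ} (ha : 0 ≤ a) (y : ℝ) : a⁻¹ * √(a * y) = √(y / a) := by
  rw [Real.sqrt_div' _ ha, Real.sqrt_mul ha, ← mul_assoc, ← div_eq_inv_mul, Real.sqrt_div_self',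
    one_div_mul_eq_div]

/-- Empirical Rademacher complexity bound for the path-norm ball of two-layer ReLU networks:
for sample points `x_1, …, x_M ∈ ℝ^m` with `‖x_i‖_∞ ≤ 1`, and `F_Q` the class of two-layer
ReLU networks (any width) with path norm at most `Q`, the empirical Rademacher complexity
`2^{-M} Σ_{ε ∈ {±1}^M} sup_{f ∈ F_Q} |(1/M) Σ_i ε_i f(x_i)|` is at most
`2 Q √(2 log(2m+2) / M)`. -/
theorem stmt16 (m M : ℕ) (hM : 0 < M) (Q : ℝ) (hQ : 0 < Q)
    (x : Fin M → Fin m → ℝ) (hx : ∀ i k, |x i k| ≤ 1)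
    (FQ : Set ((Fin m → ℝ) → ℝ))
    (hFQ : FQ = {f | ∃ (n : ℕ) (a : Fin n → ℝ) (b : Fin n → Fin m → ℝ) (c : Fin n → ℝ),
        ((n : ℝ)⁻¹ * ∑ j, |a j| * ((∑ k, |b j k|) + |c j|)) ≤ Q ∧
        ∀ y : Fin m → ℝ, f y = (n : ℝ)⁻¹ * ∑ j, a j * max ((∑ k, b j k * y k) + c j) 0}) :
    (2 ^ M : ℝ)⁻¹ * ∑ ε : Fin M → Bool,
        (⨆ f ∈ FQ, |(M : ℝ)⁻¹ * ∑ i, (if ε i then (1 : ℝ) else -1) * f (x i)|)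
      ≤ 2 * Q * Real.sqrt (2 * Real.log (2 * m + 2) / M) := by
  set S := unitNeuronSup fun i (o : Option (Fin m)) => o.elim 1 (x i)
  have hF : ∀ f ∈ FQ, ∃ (n : ℕ) (a : Fin n → ℝ) (b : Fin n → Fin m → ℝ) (c : Fin n → ℝ),
      pathNorm a b c ≤ Q ∧ f = reluNet a b c := by
    rw [hFQ]
    rintro f ⟨n, a, b, c, hpath, hf⟩
    exact ⟨n, a, b, c, hpath, funext hf⟩
  have hcard : (2 * Fintype.card (Option (Fin m)) : ℝ) = 2 * m + 2 := by
    rw [Fintype.card_option, Fintype.card_fin]; push_cast; ring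
  calc (2 ^ M : ℝ)⁻¹ * ∑ ε : Fin M → Bool,
        (⨆ f ∈ FQ, |(M : ℝ)⁻¹ * ∑ i, (if ε i then (1 : ℝ) else -1) * f (x i)|)
      ≤ (2 ^ M : ℝ)⁻¹ * ∑ ε, (M : ℝ)⁻¹ * (Q * S ε) := by
        gcongr with ε
        exact iSup_abs_inv_mul_sum_le_of_pathNorm_le hx hQ.le hF ε
    _ = Q * ((M : ℝ)⁻¹ * ((2 ^ M)⁻¹ * ∑ ε, S ε)) := by simp only [mul_sum]; ring_nf
    _ ≤ Q * ((M : ℝ)⁻¹ * (2 * √(2 * M * Real.log (2 * Fintype.card (Option (Fin m)))))) := by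
        gcongr Q * (_ * ?_)
        exact avg_unitNeuronSup_le hM _ fun i => abs_elim_one_le_one (hx i)
    _ = 2 * Q * √(2 * Real.log (2 * m + 2) / M) := by
        rw [mul_left_comm _ 2, mul_comm (2 : ℝ) M, mul_assoc (M : ℝ),
          inv_mul_sqrt_mul (Nat.cast_nonneg M), hcard]
        ring
end

section
/- Let K ⊂ R^m be compact and let g : K → R^N be continuous. Then for every ε > 0 there exist n ∈ N, a matrix W¹ ∈ R^{n×m}, a vector b¹ ∈ R^n, a matrix W² ∈ R^{N×n}, and a vector b² ∈ R^N such that sup_{x ∈ K} | W² σ(W¹x + b¹) + b² − g(x) |₂ < ε, where σ is the ReLU function applied componentwise. That is, two-layer ReLU neural networks are dense in C(K; R^N) with respect to the uniform norm. -/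
open Matrix

/-!
A continuous function of one variable is uniformly approximated on an interval by its
piecewise-linear interpolant, which is a combination of ramps `t ↦ max (t - p) 0`: writing it with
hat functions, it is at each point a convex combination of nearby values. Composing with
`x ↦ w ⬝ᵥ x`, every exponential ridge function `x ↦ exp (w ⬝ᵥ x)` lies in the closure of the span
of ReLU neurons on `K`. These exponentials are closed under products and separate points, so by
Stone–Weierstrass that closure is all of `C(K, ℝ)`. Approximating each coordinate of `g` and
stacking the neurons used gives the two matrices.
-/

open Set

namespace ReluNetwork

lemma abs_sum_mul_sub_le {ι : Type*} (s : Finset ι) {w a : ι → ℝ} {b ε : ℝ}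
    (hw : ∀ i ∈ s, 0 ≤ w i) (hw1 : ∑ i ∈ s, w i = 1) (ha : ∀ i ∈ s, w i ≠ 0 → |a i - b| ≤ ε) :
    |∑ i ∈ s, w i * a i - b| ≤ ε :=
  calc |∑ i ∈ s, w i * a i - b| = |∑ i ∈ s, w i * (a i - b)| := by
        simp only [mul_sub, Finset.sum_sub_distrib, ← Finset.sum_mul, hw1, one_mul]
    _ ≤ ∑ i ∈ s, |w i * (a i - b)| := Finset.abs_sum_le_sum_abs _ _
    _ ≤ ∑ i ∈ s, w i * ε := Finset.sum_le_sum fun i hi => by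
        rw [abs_mul, abs_of_nonneg (hw i hi)]
        rcases eq_or_ne (w i) 0 with h0 | h0
        · simp [h0]
        · exact mul_le_mul_of_nonneg_left (ha i hi h0) (hw i hi)
    _ = ε := by rw [← Finset.sum_mul, hw1, one_mul]

noncomputable def ramp (p : ℝ) : C(ℝ, ℝ) := ⟨fun t => max (t - p) 0, by fun_prop⟩

noncomputable def hat (Δ p : ℝ) : C(ℝ, ℝ) := ramp (p - Δ) - (2 : ℝ) • ramp p + ramp (p + Δ)

lemma hat_apply (Δ p t : ℝ) :
    hat Δ p t = max (t - (p - Δ)) 0 - 2 * max (t - p) 0 + max (t - (p + Δ)) 0 := by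
  simp only [hat, ramp, ContinuousMap.add_apply, ContinuousMap.sub_apply, ContinuousMap.smul_apply,
    ContinuousMap.coe_mk, smul_eq_mul]

lemma hat_mem_span_ramp (Δ p : ℝ) : hat Δ p ∈ Submodule.span ℝ (range ramp) :=
  add_mem (sub_mem (Submodule.subset_span (mem_range_self _))
    (Submodule.smul_mem _ _ (Submodule.subset_span (mem_range_self _))))
    (Submodule.subset_span (mem_range_self _))

lemma hat_nonneg {Δ : ℝ} (hΔ : 0 ≤ Δ) (p t : ℝ) : 0 ≤ hat Δ p t := by
  rw [hat_apply]
  simp only [max_def]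
  split_ifs <;> linarith

lemma hat_eq_zero {Δ : ℝ} (hΔ : 0 ≤ Δ) {p t : ℝ} (h : Δ ≤ |t - p|) : hat Δ p t = 0 := by
  rw [hat_apply]
  rcases le_abs'.1 h with h | h <;> simp only [max_def] <;> split_ifs <;> linarith

lemma sum_hat_eq {Δ A t : ℝ} (hΔ : 0 ≤ Δ) {n : ℕ} (hAt : A ≤ t) (htn : t ≤ A + n * Δ) :
    ∑ j ∈ Finset.range (n + 1), hat Δ (A + j * Δ) t = Δ := by
  set D : ℕ → ℝ := fun j => max (t - (A + j * Δ - Δ)) 0 - max (t - (A + j * Δ)) 0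
  have hD : ∀ j : ℕ, hat Δ (A + j * Δ) t = D j - D (j + 1) := fun j => by
    simp only [hat_apply, D, Nat.cast_succ]
    ring_nf
  rw [Finset.sum_congr rfl fun j _ => hD j, Finset.sum_range_sub']
  simp only [D, Nat.cast_zero, zero_mul, add_zero, Nat.cast_succ]
  rw [max_eq_left (by linarith), max_eq_left (by linarith), max_eq_right (by linarith),
    max_eq_right (by linarith)]
  ring

theorem exists_mem_span_ramp_abs_sub_le {h : ℝ → ℝ} {A B ε : ℝ} (hAB : A < B)
    (hh : ContinuousOn h (Icc A B)) (hε : 0 < ε) :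
    ∃ f ∈ Submodule.span ℝ (range ramp), ∀ t ∈ Icc A B, |f t - h t| ≤ ε := by
  obtain ⟨δ, hδ, hu⟩ := Metric.uniformContinuousOn_iff.1
    (isCompact_Icc.uniformContinuousOn_of_continuous hh) ε hε
  obtain ⟨n, hn⟩ := exists_nat_gt ((B - A) / δ)
  have hn0 : (0 : ℝ) < n := lt_of_le_of_lt (by positivity) hn
  set Δ := (B - A) / n
  have hΔ : 0 < Δ := div_pos (by linarith) hn0
  have hΔδ : Δ < δ := by rwa [div_lt_iff₀ hn0, mul_comm, ← div_lt_iff₀ hδ]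
  have hB : A + n * Δ = B := by rw [mul_div_cancel₀ _ hn0.ne']; ring
  have hnode : ∀ j ∈ Finset.range (n + 1), A + j * Δ ∈ Icc A B := fun j hj => by
    have hj : (j : ℝ) ≤ n := by exact_mod_cast Finset.mem_range_succ_iff.1 hj
    constructor <;> nlinarith
  refine ⟨∑ j ∈ Finset.range (n + 1), (h (A + j * Δ) / Δ) • hat Δ (A + j * Δ),
    Submodule.sum_mem _ fun j _ => Submodule.smul_mem _ _ (hat_mem_span_ramp _ _), ?_⟩
  rintro t ⟨hAt, htB⟩
  have hsum := sum_hat_eq hΔ.le hAt (hB.symm ▸ htB)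
  have heval : (∑ j ∈ Finset.range (n + 1), (h (A + j * Δ) / Δ) • hat Δ (A + j * Δ)) t =
      ∑ j ∈ Finset.range (n + 1), hat Δ (A + j * Δ) t / Δ * h (A + j * Δ) := by
    simp only [ContinuousMap.coe_sum, Finset.sum_apply, ContinuousMap.smul_apply, smul_eq_mul]
    exact Finset.sum_congr rfl fun j _ => by ring
  rw [heval]
  refine abs_sum_mul_sub_le _ (fun j _ => div_nonneg (hat_nonneg hΔ.le _ _) hΔ.le)
    (by rw [← Finset.sum_div, hsum, div_self hΔ.ne']) fun j hj hne => ?_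
  have hclose : |t - (A + j * Δ)| < Δ := by
    by_contra! hfar
    exact hne (by rw [hat_eq_zero hΔ.le hfar, zero_div])
  have := hu _ (hnode j hj) t ⟨hAt, htB⟩ (by rw [Real.dist_eq, abs_sub_comm]; linarith)
  exact (Real.dist_eq _ _ ▸ this).le

section OnCompact

variable {m : ℕ} (K : Set (Fin m → ℝ))

noncomputable def neuron (p : (Fin m → ℝ) × ℝ) : C(K, ℝ) :=
  ⟨fun x => max (p.1 ⬝ᵥ x + p.2) 0, by fun_prop⟩

def reluNets : Submodule ℝ C(K, ℝ) := Submodule.span ℝ (range (neuron K))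

def ridge (w : Fin m → ℝ) : C(K, ℝ) := ⟨fun x => w ⬝ᵥ x, by fun_prop⟩

noncomputable def expRidge (w : Fin m → ℝ) : C(K, ℝ) :=
  ⟨fun x => Real.exp (w ⬝ᵥ x), by fun_prop⟩

variable {K}

lemma comp_ridge_mem_reluNets {f : C(ℝ, ℝ)} (hf : f ∈ Submodule.span ℝ (range ramp))
    (w : Fin m → ℝ) : f.comp (ridge K w) ∈ reluNets K := by
  change f ∈ (reluNets K).comap (ContinuousMap.compRightAlgHom ℝ ℝ (ridge K w)).toLinearMap
  refine Submodule.span_le.2 ?_ hf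
  rintro _ ⟨p, rfl⟩
  refine Submodule.subset_span ⟨(w, -p), ?_⟩
  ext x
  simp [neuron, ramp, ridge, sub_eq_add_neg]

lemma expRidge_mem_closure_reluNets (hK : IsCompact K) (w : Fin m → ℝ) :
    expRidge K w ∈ (reluNets K).topologicalClosure := by
  have : CompactSpace K := isCompact_iff_compactSpace.mp hK
  obtain ⟨C, hC⟩ := hK.exists_bound_of_continuousOn (f := fun x => w ⬝ᵥ x) (by fun_prop)
  rw [← SetLike.mem_coe, Submodule.topologicalClosure_coe, Metric.mem_closure_iff]
  intro ε hε
  obtain ⟨f, hf, hfe⟩ := exists_mem_span_ramp_abs_sub_le (h := Real.exp) (A := -|C| - 1)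
    (B := |C| + 1) (by linarith [abs_nonneg C]) Real.continuous_exp.continuousOn (half_pos hε)
  refine ⟨f.comp (ridge K w), comp_ridge_mem_reluNets hf w, ?_⟩
  refine lt_of_le_of_lt ((ContinuousMap.dist_le (half_pos hε).le).2 fun x => ?_) (half_lt_self hε)
  have hx : |w ⬝ᵥ x| ≤ |C| := (hC x x.2).trans (le_abs_self C)
  rw [dist_comm, Real.dist_eq]
  exact hfe (w ⬝ᵥ x) ⟨by linarith [neg_abs_le (w ⬝ᵥ x)], by linarith [le_abs_self (w ⬝ᵥ x)]⟩

lemma expRidge_add (w v : Fin m → ℝ) : expRidge K (w + v) = expRidge K w * expRidge K v := by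
  ext x
  simp [expRidge, add_dotProduct, Real.exp_add]

lemma expRidge_zero : expRidge K (0 : Fin m → ℝ) = 1 := by
  ext x
  simp [expRidge]

lemma separatesPoints_adjoin_expRidge :
    (Algebra.adjoin ℝ (range (expRidge K))).SeparatesPoints := by
  intro x y hxy
  obtain ⟨k, hk⟩ : ∃ k, (x : Fin m → ℝ) k ≠ (y : Fin m → ℝ) k := Function.ne_iff.1 (Subtype.coe_ne_coe.2 hxy)
  refine ⟨_, ⟨_, Algebra.subset_adjoin (mem_range_self (Pi.single k 1)), rfl⟩, ?_⟩
  simpa [expRidge, single_dotProduct] using hk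

theorem dense_reluNets (hK : IsCompact K) : Dense (reluNets K : Set C(K, ℝ)) := by
  have : CompactSpace K := isCompact_iff_compactSpace.mp hK
  set A := Algebra.adjoin ℝ (range (expRidge K))
  have hA : Subalgebra.toSubmodule A ≤ (reluNets K).topologicalClosure := by
    rw [Algebra.adjoin_eq_span, Submodule.span_le]
    intro f hf
    obtain ⟨w, rfl⟩ : f ∈ range (expRidge K) := by
      induction hf using Submonoid.closure_induction with
      | mem f hf => exact hf
      | one => exact ⟨0, expRidge_zero⟩
      | mul f g _ _ hf hg =>
        obtain ⟨⟨w, rfl⟩, ⟨v, rfl⟩⟩ := And.intro hf hg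
        exact ⟨w + v, expRidge_add w v⟩
    exact expRidge_mem_closure_reluNets hK w
  have hdense : A.topologicalClosure = ⊤ :=
    ContinuousMap.subalgebra_topologicalClosure_eq_top_of_separatesPoints A
      separatesPoints_adjoin_expRidge
  rw [Submodule.dense_iff_topologicalClosure_eq_top, eq_top_iff]
  intro f _
  have hf : f ∈ closure (A : Set C(K, ℝ)) := by
    rw [← Subalgebra.topologicalClosure_coe, hdense]
    trivial
  exact closure_minimal hA (reluNets K).isClosed_topologicalClosure hf

theorem exists_matrix_eq_of_mem_reluNets {N : ℕ} {F : Fin N → C(K, ℝ)}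
    (hF : ∀ i, F i ∈ reluNets K) :
    ∃ (n : ℕ) (W1 : Matrix (Fin n) (Fin m) ℝ) (b1 : Fin n → ℝ) (W2 : Matrix (Fin N) (Fin n) ℝ),
      ∀ x : K, W2 *ᵥ (fun j => max ((W1 *ᵥ x) j + b1 j) 0) = fun i => F i x := by
  choose c hc using fun i => Finsupp.mem_span_range_iff_exists_finsupp.1 (hF i)
  set S := Finset.univ.biUnion fun i => (c i).support
  set e := S.equivFin.symm
  refine ⟨S.card, Matrix.of fun j => (e j).1.1, fun j => (e j).1.2,
    Matrix.of fun i j => c i (e j), fun x => funext fun i => ?_⟩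
  rw [← hc i, Finsupp.sum_of_support_subset _ (Finset.subset_biUnion_of_mem (fun i => (c i).support) (Finset.mem_univ i))
    (fun p a => a • neuron K p) fun _ _ => zero_smul ℝ _]
  simp only [ContinuousMap.coe_sum, Finset.sum_apply, ContinuousMap.smul_apply, smul_eq_mul]
  rw [← Finset.sum_coe_sort S, ← e.sum_comp]
  rfl

end OnCompact

lemma euclNorm_le_sum_abs {N : ℕ} (v : Fin N → ℝ) : euclNorm v ≤ ∑ i, |v i| := by
  rw [euclNorm, Real.sqrt_le_left (Finset.sum_nonneg fun i _ => abs_nonneg _)]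
  simpa only [sq_abs] using Finset.sum_sq_le_sq_sum_of_nonneg fun i _ => abs_nonneg (v i)

end ReluNetwork

open ReluNetwork in
/-- Universal approximation: let `K ⊂ ℝ^m` be compact and `g : K → ℝ^N` continuous. Then for
every `ε > 0` there exist `n ∈ ℕ`, `W¹ ∈ ℝ^{n×m}`, `b¹ ∈ ℝ^n`, `W² ∈ ℝ^{N×n}`, `b² ∈ ℝ^N`
with `sup_{x ∈ K} |W² σ(W¹x + b¹) + b² − g(x)|₂ < ε`, where `σ` is the componentwise ReLU;
i.e. two-layer ReLU networks are dense in `C(K; ℝ^N)` for the uniform norm. -/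
theorem stmt17 {m N : ℕ} (K : Set (Fin m → ℝ)) (hK : IsCompact K)
    (g : (Fin m → ℝ) → Fin N → ℝ) (hg : ContinuousOn g K) :
    ∀ ε : ℝ, 0 < ε →
      ∃ (n : ℕ) (W1 : Matrix (Fin n) (Fin m) ℝ) (b1 : Fin n → ℝ)
        (W2 : Matrix (Fin N) (Fin n) ℝ) (b2 : Fin N → ℝ),
        ∀ x ∈ K,
          euclNorm (W2.mulVec (fun j => max (W1.mulVec x j + b1 j) 0) + b2 - g x) < ε := by
  intro ε hε
  have : CompactSpace K := isCompact_iff_compactSpace.mp hK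
  have hδ : 0 < ε / (N + 1) := by positivity
  have hcomp : ∀ i, Continuous fun x : K => g x i := fun i => (continuous_apply i).comp hg.domRestrict
  choose F hF hFg using fun i => (dense_reluNets hK).exists_dist_lt (ContinuousMap.mk _ (hcomp i)) hδ
  obtain ⟨n, W1, b1, W2, hnet⟩ := exists_matrix_eq_of_mem_reluNets hF
  refine ⟨n, W1, b1, W2, 0, fun x hx => ?_⟩
  rw [add_zero, hnet ⟨x, hx⟩]
  calc euclNorm ((fun i => F i ⟨x, hx⟩) - g x) ≤ ∑ i, |F i ⟨x, hx⟩ - g x i| :=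
        euclNorm_le_sum_abs _
    _ ≤ ∑ _i : Fin N, ε / (N + 1) := Finset.sum_le_sum fun i _ => by
        rw [abs_sub_comm, ← Real.dist_eq]
        exact (ContinuousMap.dist_apply_le_dist ⟨x, hx⟩).trans (hFg i).le
    _ < ε := by
        rw [Finset.sum_const, Finset.card_univ, Fintype.card_fin, nsmul_eq_mul,
          mul_div_assoc', div_lt_iff₀ (by positivity)]
        linarith
end
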